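/- arXiv:math/0305435 — 8 statements merged into one kernel-verified Lean document; each statement's English description precedes it below -/
import Mathlib

section
/- Let L be a lattice (finite-index subgroup) of Z^2 with index [Z^2 : L] ≤ N^2. Then the number of points (x,y) in L with |x| ≤ N, |y| ≤ N and gcd(x,y) = 1 is at most C·N^2/[Z^2 : L] for an absolute constant C. -/
/-!
If two primitive points of `L` are neither equal nor opposite, they are not parallel, and the
sublattice they span has index `|x y' - y x'|`; as it lies in `L`, this area is a nonzero multiple
of `[ℤ² : L]`. Cut the punctured box into the four quarter-turns of the cone `|x| ≤ y ≤ N`. Inside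
the cone the slopes `x / y ∈ [-1, 1]` of such points are `[ℤ² : L] / N²`-separated, so the cone
holds at most `2 N² / [ℤ² : L] + 2` of them, which is `O(N² / [ℤ² : L])` once `[ℤ² : L] ≤ N²`.
-/

namespace PrimitivePoints

open Set

def cross (p q : ℤ × ℤ) : ℤ := p.1 * q.2 - p.2 * q.1

lemma linearIndependent_pair_of_cross_ne_zero {p q : ℤ × ℤ} (h : cross p q ≠ 0) :
    LinearIndependent ℤ ![p, q] := by
  rw [LinearIndependent.pair_iff]
  intro s t hst
  have h1 : s * p.1 + t * q.1 = 0 := by simpa using congrArg Prod.fst hst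
  have h2 : s * p.2 + t * q.2 = 0 := by simpa using congrArg Prod.snd hst
  have hs : s * cross p q = 0 := by unfold cross; linear_combination q.2 * h1 - q.1 * h2
  have ht : t * cross p q = 0 := by unfold cross; linear_combination p.1 * h2 - p.2 * h1
  exact ⟨(mul_eq_zero.mp hs).resolve_right h, (mul_eq_zero.mp ht).resolve_right h⟩

lemma index_span_pair {p q : ℤ × ℤ} (h : cross p q ≠ 0) :
    (Submodule.span ℤ (range ![p, q])).toAddSubgroup.index = (cross p q).natAbs := by
  set b := Module.Basis.span (linearIndependent_pair_of_cross_ne_zero h)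
  have hb0 : (b 0 : ℤ × ℤ) = p := by simp [b, Module.Basis.span_apply]
  have hb1 : (b 1 : ℤ × ℤ) = q := by simp [b, Module.Basis.span_apply]
  rw [AddSubgroup.index_eq_natAbs_det (Module.Basis.finTwoProd ℤ) _ b]
  simp only [Module.Basis.det_apply, Matrix.det_fin_two, Module.Basis.toMatrix_apply, hb0, hb1,
    Module.Basis.coe_finTwoProd_repr, Matrix.cons_val_zero, Matrix.cons_val_one, cross, mul_comm q.1]

lemma index_dvd_cross (L : AddSubgroup (ℤ × ℤ)) {p q : ℤ × ℤ} (hp : p ∈ L) (hq : q ∈ L) :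
    (L.index : ℤ) ∣ cross p q := by
  by_cases h : cross p q = 0
  · simp [h]
  have hle : (Submodule.span ℤ (range ![p, q])).toAddSubgroup ≤ L := by
    refine (Submodule.span_le (p := L.toIntSubmodule)).2 ?_
    rintro _ ⟨i, rfl⟩
    fin_cases i
    exacts [hp, hq]
  rw [Int.natCast_dvd, ← index_span_pair h]
  exact AddSubgroup.index_dvd_of_le hle

lemma eq_or_eq_neg_of_cross_eq_zero {p q : ℤ × ℤ} (hp : Int.gcd p.1 p.2 = 1)
    (hq : Int.gcd q.1 q.2 = 1) (h : cross p q = 0) : q = p ∨ q = -p := by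
  obtain ⟨a, b, hab⟩ := Int.isCoprime_iff_gcd_eq_one.mpr hp
  set t := a * q.1 + b * q.2
  unfold cross at h
  have h1 : q.1 = t * p.1 := by linear_combination (-b) * h - q.1 * hab
  have h2 : q.2 = t * p.2 := by linear_combination a * h - q.2 * hab
  have ht : t.natAbs = 1 := by
    have := Int.gcd_mul_left t p.1 p.2
    rwa [← h1, ← h2, hq, hp, mul_one, eq_comm] at this
  rcases Int.natAbs_eq_iff.mp ht with ht | ht <;> rw [ht] at h1 h2
  · left; ext <;> simp [h1, h2]
  · right; ext <;> simp [h1, h2]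

def IsSeparated (d : ℕ) (S : Set (ℤ × ℤ)) : Prop :=
  ∀ p ∈ S, ∀ q ∈ S, q ≠ p → q ≠ -p → (d : ℤ) ≤ |cross p q|

lemma IsSeparated.mono {d : ℕ} {S T : Set (ℤ × ℤ)} (hT : IsSeparated d T) (hST : S ⊆ T) :
    IsSeparated d S :=
  fun p hp q hq => hT p (hST hp) q (hST hq)

lemma isSeparated_primitive (L : AddSubgroup (ℤ × ℤ)) :
    IsSeparated L.index {p | p ∈ L ∧ Int.gcd p.1 p.2 = 1} := by
  rintro p ⟨hpL, hp⟩ q ⟨hqL, hq⟩ hqp hqn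
  have hcross : cross p q ≠ 0 := fun h0 =>
    (eq_or_eq_neg_of_cross_eq_zero hp hq h0).elim hqp hqn
  exact Int.le_of_dvd (abs_pos.mpr hcross) ((dvd_abs _ _).mpr (index_dvd_cross L hpL hqL))

def cone (N : ℕ) : Set (ℤ × ℤ) := {p | 0 < p.2 ∧ p.1.natAbs ≤ p.2.natAbs ∧ p.2.natAbs ≤ N}

/-- Index of the interval of width `d / N²` containing the slope `p.1 / p.2`. -/
noncomputable def slopeBucket (d N : ℕ) (p : ℤ × ℤ) : ℤ := ⌊(N ^ 2 * p.1 / (d * p.2) : ℝ)⌋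

/-- Two separated points of the cone have slopes differing by `|cross p q| / (p.2 q.2) ≥ d / N²`,
so they never share a bucket. -/
lemma IsSeparated.injOn_slopeBucket {d N : ℕ} {S : Set (ℤ × ℤ)} (hS : IsSeparated d S)
    (hd : 0 < d) (hcone : S ⊆ cone N) : InjOn (slopeBucket d N) S := by
  intro p hp q hq hbucket
  by_contra hne
  obtain ⟨hp2, -, hpN⟩ := hcone hp
  obtain ⟨hq2, -, hqN⟩ := hcone hq
  have hsep := hS p hp q hq (Ne.symm hne) (fun h => by rw [h, Prod.snd_neg] at hq2; omega)
  have hdR : (0 : ℝ) < d := by exact_mod_cast hd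
  have hp2R : (0 : ℝ) < p.2 := by exact_mod_cast hp2
  have hq2R : (0 : ℝ) < q.2 := by exact_mod_cast hq2
  have hpNR : (p.2 : ℝ) ≤ N := by exact_mod_cast (show p.2 ≤ N by omega)
  have hqNR : (q.2 : ℝ) ≤ N := by exact_mod_cast (show q.2 ≤ N by omega)
  have hdiff : (N ^ 2 * p.1 / (d * p.2) - N ^ 2 * q.1 / (d * q.2) : ℝ) =
      N ^ 2 * cross p q / (d * (p.2 * q.2)) := by
    simp only [cross]; push_cast; field_simp
  have hlt := Int.abs_sub_lt_one_of_floor_eq_floor hbucket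
  rw [hdiff, abs_div, abs_mul, abs_of_nonneg (by positivity : (0 : ℝ) ≤ N ^ 2),
    abs_of_pos (by positivity : (0 : ℝ) < d * (p.2 * q.2)), div_lt_one (by positivity)] at hlt
  have hsepR : (d : ℝ) ≤ |(cross p q : ℝ)| := by exact_mod_cast hsep
  have hprod : (p.2 : ℝ) * q.2 ≤ N ^ 2 := by nlinarith
  nlinarith [mul_le_mul_of_nonneg_left hsepR (by positivity : (0 : ℝ) ≤ N ^ 2),
    mul_le_mul_of_nonneg_left hprod hdR.le]

lemma slopeBucket_mem_Icc {d N : ℕ} {p : ℤ × ℤ} (hd : 0 < d) (hp : p ∈ cone N) :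
    slopeBucket d N p ∈ Icc ⌊-(N ^ 2 / d : ℝ)⌋ ⌊(N ^ 2 / d : ℝ)⌋ := by
  obtain ⟨hp2, hp12, -⟩ := hp
  have hdR : (0 : ℝ) < d := by exact_mod_cast hd
  have hp2R : (0 : ℝ) < p.2 := by exact_mod_cast hp2
  have hlo : -(p.2 : ℝ) ≤ p.1 := by exact_mod_cast (show -p.2 ≤ p.1 by omega)
  have hhi : (p.1 : ℝ) ≤ p.2 := by exact_mod_cast (show p.1 ≤ p.2 by omega)
  constructor <;> apply Int.floor_mono
  · rw [← neg_div, div_le_div_iff₀ hdR (by positivity)]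
    nlinarith [mul_le_mul_of_nonneg_left hlo (by positivity : (0 : ℝ) ≤ N ^ 2 * d)]
  · rw [div_le_div_iff₀ (by positivity) hdR]
    nlinarith [mul_le_mul_of_nonneg_left hhi (by positivity : (0 : ℝ) ≤ N ^ 2 * d)]

lemma IsSeparated.ncard_le_of_subset_cone {d N : ℕ} {S : Set (ℤ × ℤ)} (hS : IsSeparated d S)
    (hd : 0 < d) (hcone : S ⊆ cone N) : (S.ncard : ℝ) ≤ 2 * N ^ 2 / d + 2 := by
  have hmaps : MapsTo (slopeBucket d N) S (Icc ⌊-(N ^ 2 / d : ℝ)⌋ ⌊(N ^ 2 / d : ℝ)⌋) :=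
    fun p hp => slopeBucket_mem_Icc hd (hcone hp)
  have hcard := ncard_le_ncard hmaps.image_subset (finite_Icc _ _)
  rw [(hS.injOn_slopeBucket hd hcone).ncard_image, ← Finset.coe_Icc, ncard_coe_finset,
    Int.card_Icc] at hcard
  have hle : ⌊-(N ^ 2 / d : ℝ)⌋ ≤ ⌊(N ^ 2 / d : ℝ)⌋ :=
    Int.floor_mono (neg_le_self (by positivity))
  have hcardZ : (S.ncard : ℤ) ≤ ⌊(N ^ 2 / d : ℝ)⌋ + 1 - ⌊-(N ^ 2 / d : ℝ)⌋ := by omega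
  have hcardR : (S.ncard : ℝ) ≤ ⌊(N ^ 2 / d : ℝ)⌋ + 1 - ⌊-(N ^ 2 / d : ℝ)⌋ := by
    exact_mod_cast hcardZ
  have hhi := Int.floor_le (N ^ 2 / d : ℝ)
  have hlo := Int.sub_one_lt_floor (-(N ^ 2 / d : ℝ))
  rw [mul_div_assoc]
  linarith

def rot (p : ℤ × ℤ) : ℤ × ℤ := (-p.2, p.1)

lemma cross_rot (p q : ℤ × ℤ) : cross (rot p) (rot q) = cross p q := by
  simp only [cross, rot]; ring

lemma rot_neg (p : ℤ × ℤ) : rot (-p) = -rot p := rfl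

lemma rot_injective : Function.Injective rot := by
  intro p q h
  simp only [rot, Prod.mk.injEq, neg_inj] at h
  exact Prod.ext h.2 h.1

lemma IsSeparated.image_rot {d : ℕ} {S : Set (ℤ × ℤ)} (hS : IsSeparated d S) :
    IsSeparated d (rot '' S) := by
  rintro _ ⟨p, hp, rfl⟩ _ ⟨q, hq, rfl⟩ hqp hqn
  rw [cross_rot]
  exact hS p hp q hq (fun h => hqp (h ▸ rfl)) (fun h => hqn (by rw [h, rot_neg]))

lemma IsSeparated.image_rot_iterate {d : ℕ} {S : Set (ℤ × ℤ)} (hS : IsSeparated d S) (k : ℕ) :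
    IsSeparated d (rot^[k] '' S) := by
  induction k with
  | zero => simpa using hS
  | succ k ih => rw [Function.iterate_succ', image_comp]; exact ih.image_rot

lemma exists_rot_iterate_mem_cone {N : ℕ} {p : ℤ × ℤ} (hp : p ≠ 0) (h1 : p.1.natAbs ≤ N)
    (h2 : p.2.natAbs ≤ N) : ∃ k : Fin 4, rot^[k] p ∈ cone N := by
  have hne : p.1 ≠ 0 ∨ p.2 ≠ 0 := by
    by_contra! h; exact hp (Prod.ext h.1 h.2)
  by_cases hy : p.1.natAbs ≤ p.2.natAbs
  · by_cases hpos : 0 < p.2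
    · exact ⟨0, hpos, hy, h2⟩
    · exact ⟨2, show rot (rot p) ∈ cone N by simp only [rot, cone, mem_ofPred_eq]; omega⟩
  · by_cases hpos : 0 < p.1
    · exact ⟨1, show rot p ∈ cone N by simp only [rot, cone, mem_ofPred_eq]; omega⟩
    · exact ⟨3, show rot (rot (rot p)) ∈ cone N by simp only [rot, cone, mem_ofPred_eq]; omega⟩

lemma IsSeparated.ncard_le {d N : ℕ} {S : Set (ℤ × ℤ)} (hS : IsSeparated d S) (hd : 0 < d)
    (hbox : ∀ p ∈ S, p ≠ 0 ∧ p.1.natAbs ≤ N ∧ p.2.natAbs ≤ N) :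
    (S.ncard : ℝ) ≤ 4 * (2 * N ^ 2 / d + 2) := by
  set piece : Fin 4 → Set (ℤ × ℤ) := fun k => {p ∈ S | rot^[k] p ∈ cone N}
  have hcover : S = ⋃ k, piece k := by
    ext p
    simp only [mem_iUnion, mem_sep_iff, piece, exists_and_left, iff_self_and]
    intro hp
    obtain ⟨hp0, h1, h2⟩ := hbox p hp
    exact exists_rot_iterate_mem_cone hp0 h1 h2
  have hpiece (k : Fin 4) : ((piece k).ncard : ℝ) ≤ 2 * N ^ 2 / d + 2 := by
    rw [← ncard_image_of_injective _ (rot_injective.iterate k)]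
    refine ((hS.image_rot_iterate k).mono (image_mono (sep_subset _ _))).ncard_le_of_subset_cone
      hd ?_
    rintro _ ⟨p, hp, rfl⟩
    exact hp.2
  have hunion := ncard_iUnion_le_of_fintype piece
  rw [← hcover] at hunion
  calc (S.ncard : ℝ) ≤ ∑ k, ((piece k).ncard : ℝ) := by exact_mod_cast hunion
    _ ≤ ∑ _k : Fin 4, (2 * N ^ 2 / d + 2 : ℝ) := Finset.sum_le_sum fun k _ => hpiece k
    _ = 4 * (2 * N ^ 2 / d + 2) := by
      simp only [Finset.sum_const, Finset.card_univ, Fintype.card_fin, nsmul_eq_mul]; push_cast; ring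

end PrimitivePoints

/-- Let `L` be a lattice (finite-index subgroup) of `ℤ²` with index `[ℤ² : L] ≤ N²`.
Then the number of points `(x,y) ∈ L` with `|x| ≤ N`, `|y| ≤ N` and `gcd(x,y) = 1`
is at most `C · N² / [ℤ² : L]` for an absolute constant `C`. -/
theorem stmt_0 :
    ∃ C : ℝ, 0 < C ∧
      ∀ (N : ℕ) (L : AddSubgroup (ℤ × ℤ)), L.FiniteIndex → L.index ≤ N ^ 2 →
        (Set.ncard {p : ℤ × ℤ | p ∈ L ∧ p.1.natAbs ≤ N ∧ p.2.natAbs ≤ N ∧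
            Int.gcd p.1 p.2 = 1} : ℝ) ≤ C * (N : ℝ) ^ 2 / (L.index : ℝ) := by
  refine ⟨16, by norm_num, fun N L hL hLN => ?_⟩
  have hd : 0 < L.index := Nat.pos_of_ne_zero hL.index_ne_zero
  have hS := (PrimitivePoints.isSeparated_primitive L).mono
    (S := {p : ℤ × ℤ | p ∈ L ∧ p.1.natAbs ≤ N ∧ p.2.natAbs ≤ N ∧ Int.gcd p.1 p.2 = 1})
    fun p hp => ⟨hp.1, hp.2.2.2⟩
  have hcount := hS.ncard_le hd fun p ⟨_, h1, h2, hgcd⟩ =>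
    ⟨by rintro rfl; simp at hgcd, h1, h2⟩
  have hone : 1 ≤ (N : ℝ) ^ 2 / L.index := by
    rw [one_le_div₀ (by exact_mod_cast hd)]; exact_mod_cast hLN
  rw [mul_div_assoc] at hcount ⊢
  linarith
end

section
/- For any positive integer n, the product over all primes p dividing n of (1 + 1/p) is at most C·log(log n) for an absolute constant C (for n ≥ 3, say). -/
/-!
Since `1 + t ≤ exp t`, the product is at most `exp (∑_{p ∣ n} 1/p)`. Cut the primes dividing `n`
at `y = 2 log n`. Those below `y` contribute at most `log log y + O(1)` by Mertens' second estimate,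
obtained by partial summation from Mertens' first estimate `∑_{p ≤ N} log p / p ≤ log N + log 4`,
which in turn comes from Legendre's formula for `N!` and Chebyshev's bound `θ(N) ≤ N log 4`.
Since `n` has at most `log n / log 2` prime factors, those above `y` contribute `O(1)`.
Exponentiating gives `O(log log n)`.
-/

open Finset Real
open scoped Nat

lemma sum_primesLE_succ (f : ℕ → ℝ) (N : ℕ) :
    ∑ p ∈ Nat.primesLE (N + 1), f p =
      ∑ p ∈ Nat.primesLE N, f p + if (N + 1).Prime then f (N + 1) else 0 := by
  rw [Nat.primesLE_succ]
  split_ifs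
  · rw [sum_insert (Nat.notMem_primesLE N), add_comm]
  · rw [add_zero]

lemma Nat.Prime.div_le_factorization_factorial {p : ℕ} (hp : p.Prime) (N : ℕ) :
    N / p ≤ (N !).factorization p := by
  rw [Nat.factorization_factorial hp (Nat.lt_add_of_pos_right two_pos)]
  simpa using single_le_sum (f := fun i => N / p ^ i) (fun _ _ => Nat.zero_le _)
    (by simp : 1 ∈ Ico 1 (Nat.log p N + 2))

lemma sum_primesLE_div_mul_log_le_log_factorial (N : ℕ) :
    ∑ p ∈ Nat.primesLE N, ((N / p : ℕ) : ℝ) * log p ≤ log N ! := by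
  rw [log_nat_eq_sum_factorization, Finsupp.sum]
  calc ∑ p ∈ Nat.primesLE N, ((N / p : ℕ) : ℝ) * log p
      ≤ ∑ p ∈ Nat.primesLE N, ((N !).factorization p : ℝ) * log p := by
        gcongr with p hp
        exact (Nat.prime_of_mem_primesLE hp).div_le_factorization_factorial N
    _ ≤ ∑ p ∈ (N !).factorization.support, ((N !).factorization p : ℝ) * log p := by
        refine sum_le_sum_of_subset_of_nonneg (fun p hp => ?_) fun p _ _ => by positivity
        rw [Nat.support_factorization, Nat.mem_primeFactors]
        obtain ⟨hpN, hp⟩ := Nat.mem_primesLE.mp hp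
        exact ⟨hp, hp.dvd_factorial.mpr hpN, Nat.factorial_ne_zero N⟩

theorem sum_primesLE_log_div_le (N : ℕ) :
    ∑ p ∈ Nat.primesLE N, log p / p ≤ log N + log 4 := by
  rcases Nat.eq_zero_or_pos N with rfl | hN
  · simp only [Nat.primesLE_zero, sum_empty, Nat.cast_zero, log_zero, zero_add]
    positivity
  have hN' : (0 : ℝ) < N := by exact_mod_cast hN
  refine le_of_mul_le_mul_left ?_ hN'
  calc (N : ℝ) * ∑ p ∈ Nat.primesLE N, log p / p
      = ∑ p ∈ Nat.primesLE N, (N : ℝ) / p * log p := by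
        rw [mul_sum]; exact sum_congr rfl fun p _ => by ring
    _ ≤ ∑ p ∈ Nat.primesLE N, (((N / p : ℕ) : ℝ) + 1) * log p := by
        gcongr with p hp
        rw [← Nat.floor_div_eq_div (K := ℝ)]
        exact (Nat.lt_floor_add_one _).le
    _ = ∑ p ∈ Nat.primesLE N, ((N / p : ℕ) : ℝ) * log p + Chebyshev.theta N := by
        rw [Chebyshev.theta_eq_sum_primesLE_log, ← sum_add_distrib]
        exact sum_congr rfl fun p _ => by ring
    _ ≤ log N ! + log 4 * N :=
        add_le_add (sum_primesLE_div_mul_log_le_log_factorial N)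
          (Chebyshev.theta_le_log4_mul_x hN'.le)
    _ ≤ N * log N + log 4 * N := by
        gcongr
        calc log N ! ≤ log ((N : ℝ) ^ N) := by
              gcongr
              exact_mod_cast N.factorial_le_pow
          _ = N * log N := log_pow N N
    _ = N * (log N + log 4) := by ring

lemma one_sub_div_le_log_sub_log {a b : ℝ} (ha : 0 < a) (hb : 0 < b) :
    1 - a / b ≤ log b - log a := by
  rw [← log_div hb.ne' ha.ne', ← inv_div]
  exact one_sub_inv_le_log_of_pos (div_pos hb ha)

-- Partial summation against `1 / log p`, run as an induction on `N`.
theorem sum_primesLE_inv_sub_le (N : ℕ) (hN : 2 ≤ N) :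
    ∑ p ∈ Nat.primesLE N, (1 / p : ℝ) - (∑ p ∈ Nat.primesLE N, log p / p) / log N
      ≤ log (log N) - log 4 / log N + 2 - log (log 2) := by
  induction N, hN using Nat.le_induction with
  | base =>
    have h2 : Nat.primesLE 2 = {2} := by decide
    have hlog2 : log 2 ≠ 0 := (log_pos one_lt_two).ne'
    rw [h2, sum_singleton, sum_singleton, Nat.cast_ofNat, show (4 : ℝ) = 2 ^ 2 by norm_num,
      log_pow]
    field_simp
    norm_num
  | succ N hN ih =>
    have hlogN : 0 < log N := log_pos (by exact_mod_cast hN)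
    have hlogN' : 0 < log (N + 1 : ℕ) := log_pos (by exact_mod_cast (by omega : 1 < N + 1))
    have hlog_le : log N ≤ log (N + 1 : ℕ) := log_le_log (by positivity) (by norm_cast; omega)
    set A := ∑ p ∈ Nat.primesLE N, log p / p
    -- the new prime, if any, enters both sums with the same weight `1 / (N + 1)`
    have hstep : ∑ p ∈ Nat.primesLE (N + 1), (1 / p : ℝ)
        - (∑ p ∈ Nat.primesLE (N + 1), log p / p) / log (N + 1 : ℕ)
        = ∑ p ∈ Nat.primesLE N, (1 / p : ℝ) - A / log N
          + A * (1 / log N - 1 / log (N + 1 : ℕ)) := by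
      rw [sum_primesLE_succ, sum_primesLE_succ]
      split_ifs <;> field_simp <;> ring
    have hA : A ≤ log N + log 4 := sum_primesLE_log_div_le N
    have hdiff : 0 ≤ 1 / log N - 1 / log (N + 1 : ℕ) := by
      rw [sub_nonneg]; exact one_div_le_one_div_of_le hlogN hlog_le
    have hloglog := one_sub_div_le_log_sub_log hlogN hlogN'
    rw [hstep]
    calc _ ≤ log (log N) - log 4 / log N + 2 - log (log 2)
          + (log N + log 4) * (1 / log N - 1 / log (N + 1 : ℕ)) := by gcongr
      _ = log (log N) + 2 - log (log 2) + (1 - log N / log (N + 1 : ℕ))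
          - log 4 / log (N + 1 : ℕ) := by field_simp; ring
      _ ≤ _ := by linarith

theorem sum_primesLE_inv_le {x : ℝ} (hx : 2 ≤ x) :
    ∑ p ∈ Nat.primesLE ⌊x⌋₊, (1 / p : ℝ) ≤ log (log x) + 3 - log (log 2) := by
  set N := ⌊x⌋₊
  have hN : 2 ≤ N := Nat.le_floor (by exact_mod_cast hx)
  have hNx : (N : ℝ) ≤ x := Nat.floor_le (by linarith)
  have hlogN : 0 < log N := log_pos (by exact_mod_cast hN)
  have hA : (∑ p ∈ Nat.primesLE N, log p / p) / log N ≤ 1 + log 4 / log N := by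
    rw [div_le_iff₀ hlogN, add_mul, one_mul, div_mul_cancel₀ _ hlogN.ne']
    exact sum_primesLE_log_div_le N
  have hloglog : log (log N) ≤ log (log x) := by gcongr
  linarith [sum_primesLE_inv_sub_le N hN]

lemma sum_primeFactors_inv_le (n : ℕ) {y : ℝ} (hy : 0 < y) :
    ∑ p ∈ n.primeFactors, (1 / p : ℝ)
      ≤ ∑ p ∈ Nat.primesLE ⌊y⌋₊, (1 / p : ℝ) + #n.primeFactors / y := by
  rw [← sum_filter_add_sum_filter_not n.primeFactors (fun p => (p : ℝ) ≤ y)]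
  gcongr ?_ + ?_
  · refine sum_le_sum_of_subset_of_nonneg (fun p hp => ?_) fun p _ _ => by positivity
    rw [mem_filter] at hp
    exact Nat.mem_primesLE.mpr ⟨Nat.le_floor hp.2, Nat.prime_of_mem_primeFactors hp.1⟩
  · calc ∑ p ∈ n.primeFactors.filter (fun p : ℕ => ¬(p : ℝ) ≤ y), (1 / p : ℝ)
        ≤ ∑ p ∈ n.primeFactors.filter (fun p : ℕ => ¬(p : ℝ) ≤ y), 1 / y := by
          gcongr with p hp
          exact (not_le.mp (mem_filter.mp hp).2).le
      _ ≤ #n.primeFactors / y := by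
          rw [sum_const, nsmul_eq_mul, mul_one_div]
          gcongr
          exact filter_subset _ _

lemma card_primeFactors_mul_log_two_le (n : ℕ) : #n.primeFactors * log 2 ≤ log n := by
  rcases eq_or_ne n 0 with rfl | hn
  · simp
  have h : 2 ^ #n.primeFactors ≤ n :=
    calc 2 ^ #n.primeFactors ≤ ∏ p ∈ n.primeFactors, p :=
          pow_card_le_prod _ _ _ fun p hp => (Nat.prime_of_mem_primeFactors hp).two_le
      _ ≤ n := Nat.le_of_dvd (Nat.pos_of_ne_zero hn) (Nat.prod_primeFactors_dvd n)
  rw [← log_pow]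
  gcongr
  exact_mod_cast h

/-- For any positive integer `n ≥ 3`, the product over all primes `p` dividing `n`
of `(1 + 1/p)` is at most `C · log (log n)` for an absolute constant `C`. -/
theorem stmt_1 :
    ∃ C : ℝ, 0 < C ∧
      ∀ n : ℕ, 3 ≤ n →
        ∏ p ∈ n.primeFactors, (1 + 1 / (p : ℝ)) ≤ C * Real.log (Real.log n) := by
  have hlog3 : 1 < log 3 := by
    rw [lt_log_iff_exp_lt three_pos]
    linarith [exp_one_lt_d9]
  have hloglog3 : 0 < log (log 3) := log_pos hlog3
  set B := 3 - log (log 2) + 1 / (2 * log 2)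
  refine ⟨exp B * (1 + log 2 / log (log 3)), by positivity, fun n hn => ?_⟩
  set L := log n
  have hL : log 3 ≤ L := log_le_log three_pos (by exact_mod_cast hn)
  have hloglog : log (log 3) ≤ log L := log_le_log (by linarith) hL
  have hsum : ∑ p ∈ n.primeFactors, (1 / p : ℝ) ≤ log (log (2 * L)) + B := by
    have hcard : #n.primeFactors / (2 * L) ≤ 1 / (2 * log 2) := by
      rw [div_le_div_iff₀ (by linarith) (by positivity)]
      nlinarith [card_primeFactors_mul_log_two_le n]
    linarith [sum_primeFactors_inv_le n (y := 2 * L) (by linarith),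
      sum_primesLE_inv_le (x := 2 * L) (by linarith)]
  calc ∏ p ∈ n.primeFactors, (1 + 1 / (p : ℝ))
      ≤ exp (∑ p ∈ n.primeFactors, (1 / p : ℝ)) :=
        prod_one_add_le_exp_sum _ fun p => by positivity
    _ ≤ exp (log (log (2 * L)) + B) := exp_le_exp.mpr hsum
    _ = exp B * (log 2 + log L) := by
        rw [exp_add, exp_log (log_pos (by linarith)), log_mul two_ne_zero (by linarith)]
        ring
    _ ≤ exp B * ((1 + log 2 / log (log 3)) * log L) := by
        gcongr
        have : log 2 ≤ log 2 / log (log 3) * log L := by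
          rw [div_mul_eq_mul_div, le_div_iff₀ hloglog3]
          gcongr
        linarith
    _ = exp B * (1 + log 2 / log (log 3)) * log (log n) := by ring
end

section
/- Let p be a prime and let L, L' ⊆ Z^2 be two distinct lattices each of index p^n. Then no point (x,y) with p ∤ gcd(x,y) lies in both L and L'; that is, (A_p ∩ L) and (A_p ∩ L') are disjoint, where A_p = {(x,y) ∈ Z^2 : p ∤ gcd(x,y)}. -/
/-!
Let `N = pⁿ`. A subgroup of index `N` contains `N • (ℤ × ℤ)`. If `(x, y)` lies in both `L` and
`L'` and `gcd(x, y)` is prime to `N`, choose `a x + b y + w N = 1`; then every vector is congruent,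
modulo `N • (ℤ × ℤ) + ℤ (x, y)`, to a multiple of `(b, -a)`. So `L ⊓ L'` has cyclic quotient
killed by `N`, its index divides `N`, and being contained in `L` and `L'` it equals both.
-/

theorem Int.exists_mul_add_mul_add_mul_eq_one {x y : ℤ} {N : ℕ}
    (hcop : Nat.Coprime (Int.gcd x y) N) : ∃ a b w : ℤ, a * x + b * y + w * N = 1 := by
  obtain ⟨u, w, huw⟩ := Nat.isCoprime_iff_coprime.mpr hcop
  refine ⟨u * Int.gcdA x y, u * Int.gcdB x y, w, ?_⟩
  rw [← huw, Int.gcd_eq_gcd_ab x y]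
  ring

namespace AddSubgroup

theorem eq_of_le_of_index_dvd {G : Type*} [AddGroup G] {H K : AddSubgroup G} (hle : H ≤ K)
    (hK : K.index ≠ 0) (hdvd : H.index ∣ K.index) : H = K := by
  have : H.FiniteIndex := ⟨ne_zero_of_dvd_ne_zero hK hdvd⟩
  by_contra hne
  exact (index_strictAnti (hle.lt_of_ne hne)).not_ge (Nat.le_of_dvd (Nat.pos_of_ne_zero hK) hdvd)

variable {N : ℕ} {x y : ℤ} {K : AddSubgroup (ℤ × ℤ)}

theorem index_dvd_of_nsmul_mem_of_coprime_gcd (hN : ∀ z : ℤ × ℤ, N • z ∈ K)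
    (hxy : (x, y) ∈ K) (hcop : Nat.Coprime (Int.gcd x y) N) : K.index ∣ N := by
  obtain ⟨a, b, w, hab⟩ := Int.exists_mul_add_mul_add_mul_eq_one hcop
  set g : (ℤ × ℤ) ⧸ K := QuotientAddGroup.mk (b, -a)
  have hg_generates : ∀ q : (ℤ × ℤ) ⧸ K, q ∈ zmultiples g := by
    intro q
    obtain ⟨⟨m, k⟩, rfl⟩ := QuotientAddGroup.mk_surjective q
    have hdecomp : (m * y - k * x) • ((b, -a) : ℤ × ℤ) - (m, k)
        = -((m * a + k * b) • (x, y) + N • (w * m, w * k)) := by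
      ext <;> simp only [Prod.smul_fst, Prod.smul_snd, Prod.fst_add, Prod.snd_add, Prod.fst_sub,
        Prod.snd_sub, Prod.fst_neg, Prod.snd_neg, smul_eq_mul]
      · linear_combination m * hab
      · linear_combination k * hab
    refine ⟨m * y - k * x, ?_⟩
    change (m * y - k * x) • g = _
    rw [← QuotientAddGroup.mk_zsmul, QuotientAddGroup.eq_iff_sub_mem, hdecomp]
    exact neg_mem (add_mem (zsmul_mem hxy _) (hN _))
  have hNg : N • g = 0 := by
    rw [← QuotientAddGroup.mk_nsmul, QuotientAddGroup.eq_zero_iff]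
    exact hN _
  rw [index_eq_card, ← addOrderOf_eq_card_of_forall_mem_zmultiples hg_generates]
  exact addOrderOf_dvd_of_nsmul_eq_zero hNg

end AddSubgroup

/-- Let `p` be a prime and `L, L' ⊆ ℤ²` two distinct lattices each of index `pⁿ`.
Then no point `(x,y)` with `p ∤ gcd(x,y)` lies in both `L` and `L'`. -/
theorem stmt_2 (p : ℕ) (hp : p.Prime) (n : ℕ) (L L' : AddSubgroup (ℤ × ℤ))
    (hL : L.index = p ^ n) (hL' : L'.index = p ^ n) (hne : L ≠ L') :
    ∀ x y : ℤ, ¬ (p ∣ Int.gcd x y) → ¬ ((x, y) ∈ L ∧ (x, y) ∈ L') := by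
  rintro x y hpgcd ⟨hxyL, hxyL'⟩
  have hcop : Nat.Coprime (Int.gcd x y) (p ^ n) :=
    ((hp.coprime_iff_not_dvd.mpr hpgcd).symm).pow_right n
  have hN : ∀ z, p ^ n • z ∈ L ⊓ L' := fun z =>
    ⟨hL ▸ L.nsmul_index_mem z, hL' ▸ L'.nsmul_index_mem z⟩
  have hdvd := AddSubgroup.index_dvd_of_nsmul_mem_of_coprime_gcd hN ⟨hxyL, hxyL'⟩ hcop
  have hpn : p ^ n ≠ 0 := pow_ne_zero n hp.ne_zero
  have hinfL := AddSubgroup.eq_of_le_of_index_dvd inf_le_left (hL ▸ hpn) (hL ▸ hdvd)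
  have hinfL' := AddSubgroup.eq_of_le_of_index_dvd inf_le_right (hL' ▸ hpn) (hL' ▸ hdvd)
  exact hne (hinfL.symm.trans hinfL')
end

section
/- Let L ⊆ Z^2 be a lattice and let L', L'' ⊆ L be cosets of lattices contained in L. Then L' ∩ L'' is either empty or a coset of a lattice whose index in Z^2 divides [Z^2 : L']·[Z^2 : L'']/[Z^2 : L]. -/
/-!
A coset `a + M` contained in the subgroup `L` forces `M ≤ L`. Two cosets that meet in `c` are
`c + M` and `c + M'`, so their intersection is `c + (M ⊓ M')`. For the index, measure everything
relative to `L`: `[L : M ⊓ M'] = [M' : M ⊓ M'] · [L : M']` and `[M' : M ⊓ M'] ∣ [L : M]` because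
`M' / (M ⊓ M')` embeds in `L / M`; multiplying by `[ℤ² : L]` twice gives the claim.
-/

open scoped Pointwise

namespace AddSubgroup

variable {G : Type*}

section AddGroup

variable [AddGroup G] {H K : AddSubgroup G}

theorem le_of_vadd_coe_subset {a : G} (h : a +ᵥ (H : Set G) ⊆ K) : H ≤ K := fun m hm =>
  (K.add_mem_cancel_left (h ⟨0, H.zero_mem, add_zero a⟩)).mp (h ⟨m, hm, rfl⟩)

theorem vadd_coe_inter_vadd_coe {a b c : G} (ha : c ∈ a +ᵥ (H : Set G))
    (hb : c ∈ b +ᵥ (K : Set G)) :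
    (a +ᵥ (H : Set G)) ∩ (b +ᵥ (K : Set G)) = c +ᵥ ((H ⊓ K : AddSubgroup G) : Set G) := by
  rw [(leftAddCoset_eq_iff H).mpr ((mem_leftAddCoset_iff a).mp ha),
    (leftAddCoset_eq_iff K).mpr ((mem_leftAddCoset_iff b).mp hb), coe_inf, Set.vadd_set_inter]

end AddGroup

section AddCommGroup

variable [AddCommGroup G] {H K L : AddSubgroup G}

theorem relIndex_inf_dvd_mul_relIndex (hK : K ≤ L) :
    (H ⊓ K).relIndex L ∣ H.relIndex L * K.relIndex L := by
  have hHK : H.relIndex K ∣ H.relIndex L := by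
    rw [← relIndex_addSubgroupOf hK]
    exact relIndex_dvd_index_of_normal _ _
  rw [← relIndex_inf_mul_relIndex, inf_of_le_left hK]
  exact mul_dvd_mul_right hHK _

theorem index_inf_mul_index_dvd (hH : H ≤ L) (hK : K ≤ L) :
    (H ⊓ K).index * L.index ∣ H.index * K.index := by
  rw [← relIndex_mul_index (inf_le_left.trans hH), ← relIndex_mul_index hH,
    ← relIndex_mul_index hK, mul_mul_mul_comm, mul_assoc]
  exact mul_dvd_mul_right (relIndex_inf_dvd_mul_relIndex hK) _

end AddCommGroup

end AddSubgroup

theorem stmt_3_general (L M M' : AddSubgroup (ℤ × ℤ)) (a b : ℤ × ℤ)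
    (hM : M.FiniteIndex) (hM' : M'.FiniteIndex)
    (ha : a +ᵥ (M : Set (ℤ × ℤ)) ⊆ (L : Set (ℤ × ℤ)))
    (hb : b +ᵥ (M' : Set (ℤ × ℤ)) ⊆ (L : Set (ℤ × ℤ))) :
    (a +ᵥ (M : Set (ℤ × ℤ))) ∩ (b +ᵥ (M' : Set (ℤ × ℤ))) = ∅ ∨
      ∃ (P : AddSubgroup (ℤ × ℤ)) (c : ℤ × ℤ), P.FiniteIndex ∧
        P.index * L.index ∣ M.index * M'.index ∧
        (a +ᵥ (M : Set (ℤ × ℤ))) ∩ (b +ᵥ (M' : Set (ℤ × ℤ))) = c +ᵥ (P : Set (ℤ × ℤ)) := by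
  rcases ((a +ᵥ (M : Set (ℤ × ℤ))) ∩ (b +ᵥ (M' : Set (ℤ × ℤ)))).eq_empty_or_nonempty with
    hempty | ⟨c, hca, hcb⟩
  · exact Or.inl hempty
  · exact Or.inr ⟨M ⊓ M', c, inferInstance,
      AddSubgroup.index_inf_mul_index_dvd (AddSubgroup.le_of_vadd_coe_subset ha)
        (AddSubgroup.le_of_vadd_coe_subset hb),
      AddSubgroup.vadd_coe_inter_vadd_coe hca hcb⟩

/-- Let `L ⊆ ℤ²` be a lattice and `L' = a + M`, `L'' = b + M'` cosets of lattices,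
both contained in `L`.  Then `L' ∩ L''` is either empty or a coset of a lattice `P`
whose index in `ℤ²` divides `[ℤ² : L'] · [ℤ² : L''] / [ℤ² : L]`
(expressed multiplicatively as `[ℤ² : P] · [ℤ² : L] ∣ [ℤ² : L'] · [ℤ² : L'']`). -/
theorem stmt_3 (L M M' : AddSubgroup (ℤ × ℤ)) (a b : ℤ × ℤ)
    (hL : L.FiniteIndex) (hM : M.FiniteIndex) (hM' : M'.FiniteIndex)
    (ha : a +ᵥ (M : Set (ℤ × ℤ)) ⊆ (L : Set (ℤ × ℤ)))
    (hb : b +ᵥ (M' : Set (ℤ × ℤ)) ⊆ (L : Set (ℤ × ℤ))) :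
    (a +ᵥ (M : Set (ℤ × ℤ))) ∩ (b +ᵥ (M' : Set (ℤ × ℤ))) = ∅ ∨
      ∃ (P : AddSubgroup (ℤ × ℤ)) (c : ℤ × ℤ), P.FiniteIndex ∧
        P.index * L.index ∣ M.index * M'.index ∧
        (a +ᵥ (M : Set (ℤ × ℤ))) ∩ (b +ᵥ (M' : Set (ℤ × ℤ))) = c +ᵥ (P : Set (ℤ × ℤ)) :=
  stmt_3_general L M M' a b hM hM' ha hb
end

section
/- Let k be a positive integer. Then the sum over square-full integers n > N of τ_k(n)/n is O((log N)^{k^2 + k^3 - 2} / N^{1/2}), with implied constant depending only on k. -/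
open scoped Classical

/-- `τ_k(n)`: the number of `k`-tuples of positive integers with product `n`. -/
noncomputable def tauk (k n : ℕ) : ℕ :=
  Nat.card {f : Fin k → ℕ // (∀ i, 0 < f i) ∧ ∏ i, f i = n}

/-- A positive integer is square-full if `p² ∣ n` for every prime `p ∣ n`. -/
def Squarefull (n : ℕ) : Prop := ∀ p : ℕ, p.Prime → p ∣ n → p ^ 2 ∣ n

/-!
A square-full `n` is `a² b³`, and `τ_k(a² b³) ≤ τ_{k²}(a) τ_{k³}(b)`, since `τ_k` is
submultiplicative and `τ_j(n) τ_m(n) ≤ τ_{jm}(n)` (two factorizations of `n` into `j` and `m`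
factors refine to a `j × m` matrix of factors with these row and column products). Expanding
`τ_j(a) = #{c ∈ ℕ+^j : ∏ c = a}`, the sum is at most `∑ (A² B³)⁻¹` over pairs of tuples
`c ∈ ℕ+^(k²)`, `e ∈ ℕ+^(k³)` with `A² B³ > N`, where `A = ∏ c`, `B = ∏ e`.
For fixed `e` this is `B⁻³` times the tail `∑_{A > t} A⁻²` at `t = √(N / B³)`, and that tail is
at most `4^(k²) (1 + log N)^(k² - 1) / t`: induct on the length of `c`, splitting off its first
entry `d`; for `d ≤ t` the harmonic sum `∑ 1/d` costs one more logarithm, for `d > t` the full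
sum `∑ A⁻² ≤ 2^j` suffices. What remains is `√N⁻¹ ∑_e B^(-3/2) ≤ 3^(k³) / √N`.
-/

open Finset
open scoped ENNReal

lemma Squarefull.exists_eq_sq_mul_cube {n : ℕ} (hn : 0 < n) (h : Squarefull n) :
    ∃ a b : ℕ+, n = (a : ℕ) ^ 2 * (b : ℕ) ^ 3 := by
  -- `n = s² r` with `r` squarefree; every prime of `r` divides `s` (else `p² ∣ r`), so `r ∣ s`.
  obtain ⟨r, s, hr, hs, rfl, hsq⟩ := Nat.sq_mul_squarefree_of_pos hn
  have hrs : r ∣ s := by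
    rw [← Nat.prod_primeFactors_of_squarefree hsq]
    refine prod_primes_dvd _ (fun p hp => (Nat.prime_of_mem_primeFactors hp).prime)
      fun p hp => ?_
    have hp' := Nat.prime_of_mem_primeFactors hp
    by_contra hps
    have hcop : Nat.Coprime (p ^ 2) (s ^ 2) := ((hp'.coprime_iff_not_dvd).mpr hps).pow 2 2
    have hpr : p ^ 2 ∣ r := hcop.dvd_of_dvd_mul_left <|
      h p hp' (dvd_mul_of_dvd_right (Nat.dvd_of_mem_primeFactors hp) _)
    exact hp'.not_isUnit (hsq p (sq p ▸ hpr))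
  obtain ⟨t, rfl⟩ := hrs
  exact ⟨⟨t, Nat.pos_of_mul_pos_left hs⟩, ⟨r, hr⟩, by simp only [PNat.mk_coe]; ring⟩

def tupleProd {j : ℕ} (c : Fin j → ℕ+) : ℕ := ∏ i, (c i : ℕ)

@[simp] lemma tupleProd_cons {j : ℕ} (d : ℕ+) (c : Fin j → ℕ+) :
    tupleProd (Fin.cons d c : Fin (j + 1) → ℕ+) = d * tupleProd c := by
  simp [tupleProd, Fin.prod_univ_succ]

lemma tupleProd_mul {j : ℕ} (a b : Fin j → ℕ+) : tupleProd (a * b) = tupleProd a * tupleProd b := by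
  simp [tupleProd, prod_mul_distrib]

lemma tupleProd_pos {j : ℕ} (c : Fin j → ℕ+) : 0 < tupleProd c :=
  prod_pos fun i _ => (c i).pos

abbrev Factorizations (j n : ℕ) := {c : Fin j → ℕ+ // tupleProd c = n}

lemma tauk_le_card_factorizations (k n : ℕ) :
    (tauk k n : ℕ∞) ≤ ENat.card (Factorizations k n) := by
  rw [tauk, Nat.card_congr (β := Factorizations k n)
    { toFun f := ⟨fun i => ⟨f.1 i, f.2.1 i⟩, f.2.2⟩
      invFun c := ⟨fun i => c.1 i, fun i => (c.1 i).pos, c.2⟩ }]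
  cases finite_or_infinite (Factorizations k n) <;> simp [ENat.card_eq_coe_natCard]

lemma exists_mul_eq_of_dvd_tupleProd {j : ℕ} (d : Fin j → ℕ+) {u : ℕ} (h : u ∣ tupleProd d) :
    ∃ a b : Fin j → ℕ+, tupleProd a = u ∧ a * b = d := by
  induction j generalizing u with
  | zero => exact ⟨1, 1, by simpa [tupleProd] using (Nat.dvd_one.mp h).symm, Subsingleton.elim _ _⟩
  | succ j ih =>
    rw [← Fin.cons_self_tail d, tupleProd_cons] at h
    obtain ⟨u₀, u₁, ⟨v, hv⟩, h₁, rfl⟩ := exists_dvd_and_dvd_of_dvd_mul h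
    obtain ⟨a, b, rfl, hab⟩ := ih (Fin.tail d) h₁
    have hu₀ : 0 < u₀ := Nat.pos_of_mul_pos_right (hv ▸ (d 0).pos)
    have hv₀ : 0 < v := Nat.pos_of_mul_pos_left (hv ▸ (d 0).pos)
    refine ⟨Fin.cons (u₀.toPNat hu₀) a, Fin.cons (v.toPNat hv₀) b, by rw [tupleProd_cons]; rfl, ?_⟩
    rw [← Fin.cons_self_tail d, ← hab]
    exact funext fun i => Fin.cases (PNat.eq hv.symm) (fun i => rfl) i

lemma card_factorizations_mul_le (j u v : ℕ) :
    ENat.card (Factorizations j (u * v)) ≤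
      ENat.card (Factorizations j u) * ENat.card (Factorizations j v) := by
  have split (c : Factorizations j (u * v)) :
      ∃ p : Factorizations j u × Factorizations j v, p.1.1 * p.2.1 = c.1 := by
    obtain ⟨a, b, ha, hab⟩ := exists_mul_eq_of_dvd_tupleProd c.1 (c.2 ▸ dvd_mul_right u v)
    have hb : tupleProd b = v := by
      have := c.2
      rw [← hab, tupleProd_mul, ha] at this
      exact Nat.eq_of_mul_eq_mul_left (ha ▸ tupleProd_pos a) this
    exact ⟨(⟨a, ha⟩, ⟨b, hb⟩), hab⟩
  choose f hf using split
  rw [← ENat.card_prod]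
  exact ENat.card_le_card_of_injective (f := f) fun c c' h => Subtype.ext <| by
    rw [← hf c, ← hf c', h]

lemma exists_matrix_of_tupleProd_eq {j m : ℕ} (d : Fin j → ℕ+) (e : Fin m → ℕ+)
    (h : tupleProd d = tupleProd e) :
    ∃ c : Fin j → Fin m → ℕ+, (∀ i, tupleProd (c i) = d i) ∧ ∀ l, tupleProd (c · l) = e l := by
  induction j generalizing e with
  | zero =>
    refine ⟨Fin.elim0, fun i => i.elim0, fun l => ?_⟩
    have he : tupleProd e = 1 := by simpa [tupleProd] using h.symm
    have : (e l : ℕ) ∣ 1 := he ▸ dvd_prod_of_mem _ (mem_univ l)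
    simpa [tupleProd] using (Nat.dvd_one.mp this).symm
  | succ j ih =>
    rw [← Fin.cons_self_tail d, tupleProd_cons] at h
    obtain ⟨a, b, ha, rfl⟩ := exists_mul_eq_of_dvd_tupleProd e (h ▸ dvd_mul_right _ _)
    rw [tupleProd_mul, ha] at h
    obtain ⟨c, hrow, hcol⟩ := ih (Fin.tail d) b (Nat.eq_of_mul_eq_mul_left (d 0).pos h)
    refine ⟨Fin.cons a c, fun i => Fin.cases ha (fun i => hrow i) i, fun l => ?_⟩
    have hcons : (fun i => (Fin.cons a c : Fin (j + 1) → Fin m → ℕ+) i l) =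
        Fin.cons (a l) (c · l) := by
      ext i; refine Fin.cases rfl (fun i => rfl) i
    rw [hcons, tupleProd_cons, hcol l, Pi.mul_apply, PNat.mul_coe]

lemma card_mul_card_factorizations_le (j m n : ℕ) :
    ENat.card (Factorizations j n) * ENat.card (Factorizations m n) ≤
      ENat.card (Factorizations (j * m) n) := by
  have merge (p : Factorizations j n × Factorizations m n) :
      ∃ c : Factorizations (j * m) n,
        (∀ i, tupleProd (fun l => c.1 (finProdFinEquiv (i, l))) = p.1.1 i) ∧
        ∀ l, tupleProd (fun i => c.1 (finProdFinEquiv (i, l))) = p.2.1 l := by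
    obtain ⟨c, hrow, hcol⟩ := exists_matrix_of_tupleProd_eq p.1.1 p.2.1 (p.1.2.trans p.2.2.symm)
    refine ⟨⟨fun x => c (finProdFinEquiv.symm x).1 (finProdFinEquiv.symm x).2, ?_⟩, ?_, ?_⟩
    · rw [← p.1.2, tupleProd, ← finProdFinEquiv.prod_comp, Fintype.prod_prod_type]
      simp [← hrow, tupleProd]
    · simpa using hrow
    · simpa using hcol
  choose f hrow hcol using merge
  rw [← ENat.card_prod]
  refine ENat.card_le_card_of_injective (f := f) fun p p' h => Prod.ext ?_ ?_
  · exact Subtype.ext <| funext fun i => PNat.eq <| by rw [← hrow, ← hrow, h]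
  · exact Subtype.ext <| funext fun l => PNat.eq <| by rw [← hcol, ← hcol, h]

lemma card_factorizations_pow_succ_le (j n p : ℕ) :
    ENat.card (Factorizations j (n ^ (p + 1))) ≤ ENat.card (Factorizations (j ^ (p + 1)) n) := by
  induction p with
  | zero => simp
  | succ p ih =>
    calc ENat.card (Factorizations j (n ^ (p + 1) * n))
        ≤ ENat.card (Factorizations j (n ^ (p + 1))) * ENat.card (Factorizations j n) :=
          card_factorizations_mul_le j _ n
      _ ≤ ENat.card (Factorizations (j ^ (p + 1)) n) * ENat.card (Factorizations j n) := by
          gcongr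
      _ ≤ ENat.card (Factorizations (j ^ (p + 1) * j) n) := card_mul_card_factorizations_le ..

def sqMulCube {j m : ℕ} (q : (Fin j → ℕ+) × (Fin m → ℕ+)) : ℕ :=
  tupleProd q.1 ^ 2 * tupleProd q.2 ^ 3

lemma tauk_le_encard_sqMulCube_preimage {k n : ℕ} (hn : 0 < n) (h : Squarefull n) :
    (tauk k n : ℕ∞) ≤
      (sqMulCube ⁻¹' {n} : Set ((Fin (k ^ 2) → ℕ+) × (Fin (k ^ 3) → ℕ+))).encard := by
  obtain ⟨a, b, rfl⟩ := h.exists_eq_sq_mul_cube hn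
  calc (tauk k (a ^ 2 * b ^ 3) : ℕ∞)
      ≤ ENat.card (Factorizations k (a ^ 2)) * ENat.card (Factorizations k (b ^ 3)) :=
        (tauk_le_card_factorizations k _).trans (card_factorizations_mul_le k _ _)
    _ ≤ ENat.card (Factorizations (k ^ 2) a × Factorizations (k ^ 3) b) := by
        rw [ENat.card_prod]
        gcongr
        exacts [card_factorizations_pow_succ_le k a 1, card_factorizations_pow_succ_le k b 2]
    _ ≤ _ := by
        rw [← ENat.card_coe_set_eq]
        refine ENat.card_le_card_of_injective
          (f := fun p => ⟨(p.1.1, p.2.1), by simp [sqMulCube, p.1.2, p.2.2]⟩) fun p p' h => ?_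
        simp only [Subtype.mk.injEq, Prod.mk.injEq] at h
        exact Prod.ext (Subtype.ext h.1) (Subtype.ext h.2)

lemma tsum_squarefull_le_tsum_inv_sqMulCube (k N : ℕ) :
    ∑' n : ℕ, ENNReal.ofReal (if N < n ∧ Squarefull n then (tauk k n : ℝ) / n else 0) ≤
      ∑' q : (Fin (k ^ 2) → ℕ+) × (Fin (k ^ 3) → ℕ+),
        ENNReal.ofReal (if (N : ℝ) < sqMulCube q then (sqMulCube q : ℝ)⁻¹ else 0) := by
  rw [← ENNReal.tsum_fiberwise _ sqMulCube]
  refine ENNReal.tsum_le_tsum fun n => ?_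
  have hfib (q : (sqMulCube ⁻¹' {n} : Set ((Fin (k ^ 2) → ℕ+) × (Fin (k ^ 3) → ℕ+)))) :
      sqMulCube q.1 = n := q.2
  simp only [hfib, ENNReal.tsum_set_const]
  split_ifs with h h'
  · rw [div_eq_mul_inv, ENNReal.ofReal_mul (by positivity), ENNReal.ofReal_natCast,
      ← ENat.toENNReal_coe]
    gcongr
    exact tauk_le_encard_sqMulCube_preimage (by omega) h.2
  · exact absurd (Nat.cast_lt.mpr h.1) h'
  all_goals simp

lemma sum_range_inv_sq_of_lt_le {t : ℝ} (ht : 0 ≤ t) (n : ℕ) :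
    ∑ i ∈ range n, (if t < i then ((i : ℝ) ^ 2)⁻¹ else 0) ≤ 2 / (⌊t⌋₊ + 1) := by
  have hfilter : (range n).filter (fun i : ℕ => t < i) = Ioo ⌊t⌋₊ n := by
    ext i
    simp [Nat.floor_lt ht, and_comm]
  rw [← sum_filter, hfilter]
  exact sum_Ioo_inv_sq_le _ _

lemma sum_range_inv_of_le_le {t T : ℝ} (htT : t ≤ T) (hT : 1 ≤ T) (n : ℕ) :
    ∑ i ∈ range n, (if (i : ℝ) ≤ t then (i : ℝ)⁻¹ else 0) ≤ 1 + Real.log T := by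
  calc ∑ i ∈ range n, (if (i : ℝ) ≤ t then (i : ℝ)⁻¹ else 0)
      ≤ ∑ i ∈ range (⌊T⌋₊ + 1), (i : ℝ)⁻¹ := by
        rw [← sum_filter]
        refine sum_le_sum_of_subset_of_nonneg (fun i hi => ?_) fun i _ _ => by positivity
        simp only [mem_filter, mem_range] at hi ⊢
        exact Nat.lt_succ_of_le (Nat.le_floor (hi.2.trans htT))
    _ = harmonic ⌊T⌋₊ := by simp [harmonic, sum_range_succ']
    _ ≤ 1 + Real.log ⌊T⌋₊ := harmonic_le_one_add_log _
    _ ≤ 1 + Real.log T := by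
        gcongr
        · exact_mod_cast Nat.floor_pos.mpr hT
        · exact Nat.floor_le (by linarith)

lemma sum_range_inv_mul_sqrt_le (n : ℕ) : ∑ i ∈ range n, ((i : ℝ) * √i)⁻¹ ≤ 3 := by
  suffices h : ∀ n ≥ 1, ∑ i ∈ range (n + 1), ((i : ℝ) * √i)⁻¹ ≤ 3 - 2 / √n by
    rcases n with _ | _ | n
    · simp
    · norm_num
    · exact (h (n + 1) (by omega)).trans (by linarith [show 0 ≤ 2 / √(n + 1 : ℕ) by positivity])
  intro n hn
  induction n, hn using Nat.le_induction with
  | base => norm_num [sum_range_succ]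
  | succ n hn ih =>
    rw [sum_range_succ]
    -- `1 / y³ ≤ 2 / x - 2 / y` for `x = √n`, `y = √(n + 1)`, using `y² - x² = 1`
    have key : (((n + 1 : ℕ) : ℝ) * √(n + 1 : ℕ))⁻¹ ≤ 2 / √n - 2 / √(n + 1 : ℕ) := by
      have hn' : (1 : ℝ) ≤ n := by exact_mod_cast hn
      set x := √(n : ℝ) with hx
      set y := √((n + 1 : ℕ) : ℝ) with hy
      have hx0 : 0 < x := Real.sqrt_pos.mpr (by linarith)
      have hxy : x ≤ y := Real.sqrt_le_sqrt (by push_cast; linarith)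
      have hx2 : x ^ 2 = n := Real.sq_sqrt (by linarith)
      have hy2 : y ^ 2 = ((n + 1 : ℕ) : ℝ) := Real.sq_sqrt (by positivity)
      rw [← hy2, ← one_div, div_sub_div _ _ hx0.ne' (hx0.trans_le hxy).ne',
        div_le_div_iff₀ (by positivity) (by positivity)]
      push_cast at hy2
      have hy0 : 0 < y := hx0.trans_le hxy
      have h1 : x * y * (y ^ 2 - x ^ 2 - 1) = 0 := by rw [hx2, hy2]; ring
      nlinarith [mul_nonneg (mul_nonneg hy0.le (sq_nonneg (y - x))) (by positivity : 0 ≤ 2 * y + x)]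
    linarith

lemma tsum_pnat_ofReal_le {g : ℕ → ℝ} {C : ℝ} (hg : ∀ n, 0 ≤ g n)
    (h : ∀ n, ∑ i ∈ range n, g i ≤ C) : ∑' d : ℕ+, ENNReal.ofReal (g d) ≤ ENNReal.ofReal C :=
  (ENNReal.tsum_comp_le_tsum_of_injective PNat.coe_injective _).trans <|
    ENNReal.tsum_le_of_sum_range_le fun n => by
      rw [← ENNReal.ofReal_sum_of_nonneg fun i _ => hg i]
      exact ENNReal.ofReal_le_ofReal (h n)

lemma tsum_pnat_inv_sq_of_lt_le {t : ℝ} (ht : 0 ≤ t) :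
    ∑' d : ℕ+, ENNReal.ofReal (if t < d then ((d : ℝ) ^ 2)⁻¹ else 0) ≤
      ENNReal.ofReal (2 / (⌊t⌋₊ + 1)) :=
  tsum_pnat_ofReal_le (fun _ => by positivity) (sum_range_inv_sq_of_lt_le ht)

lemma tsum_pnat_inv_sq_of_lt_le_two_div {t : ℝ} (ht : 0 < t) :
    ∑' d : ℕ+, ENNReal.ofReal (if t < d then ((d : ℝ) ^ 2)⁻¹ else 0) ≤ ENNReal.ofReal (2 / t) :=
  (tsum_pnat_inv_sq_of_lt_le ht.le).trans <| ENNReal.ofReal_le_ofReal <|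
    div_le_div_of_nonneg_left zero_le_two ht (Nat.lt_floor_add_one t).le

lemma tsum_pnat_inv_of_le_le {t T : ℝ} (htT : t ≤ T) (hT : 1 ≤ T) :
    ∑' d : ℕ+, ENNReal.ofReal (if (d : ℝ) ≤ t then (d : ℝ)⁻¹ else 0) ≤
      ENNReal.ofReal (1 + Real.log T) :=
  tsum_pnat_ofReal_le (fun _ => by positivity) (sum_range_inv_of_le_le htT hT)

lemma tsum_tuple_succ {j : ℕ} (g : (Fin (j + 1) → ℕ+) → ℝ≥0∞) :
    ∑' c, g c = ∑' (d : ℕ+) (c : Fin j → ℕ+), g (Fin.cons d c) := by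
  rw [← (Fin.consEquiv fun _ => ℕ+).tsum_eq, ENNReal.tsum_prod']
  rfl

lemma tsum_ofReal_tupleProd_eq_pow {g : ℝ → ℝ} (hg : ∀ x, 0 ≤ x → 0 ≤ g x)
    (hmul : ∀ x y, 0 ≤ x → 0 ≤ y → g (x * y) = g x * g y) (hone : g 1 = 1) (j : ℕ) :
    ∑' c : Fin j → ℕ+, ENNReal.ofReal (g (tupleProd c)) =
      (∑' d : ℕ+, ENNReal.ofReal (g d)) ^ j := by
  induction j with
  | zero => simp [tupleProd, hone]
  | succ j ih =>
    simp only [tsum_tuple_succ, tupleProd_cons, Nat.cast_mul]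
    simp only [hmul _ _ (Nat.cast_nonneg _) (Nat.cast_nonneg _),
      ENNReal.ofReal_mul (hg _ (Nat.cast_nonneg _)), ENNReal.tsum_mul_left, ih,
      ENNReal.tsum_mul_right, pow_succ']

lemma tsum_tuple_inv_sq_le (j : ℕ) :
    ∑' c : Fin j → ℕ+, ENNReal.ofReal (((tupleProd c : ℝ) ^ 2)⁻¹) ≤ 2 ^ j := by
  rw [tsum_ofReal_tupleProd_eq_pow (g := fun x => (x ^ 2)⁻¹) (fun x _ => by positivity)
    (fun x y _ _ => by ring) (by simp)]
  gcongr
  simpa [(PNat.pos _).trans_le'] using tsum_pnat_inv_sq_of_lt_le le_rfl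

lemma tsum_tuple_inv_mul_sqrt_le (j : ℕ) :
    ∑' c : Fin j → ℕ+, ENNReal.ofReal (((tupleProd c : ℝ) * √(tupleProd c))⁻¹) ≤ 3 ^ j := by
  rw [tsum_ofReal_tupleProd_eq_pow (g := fun x => (x * √x)⁻¹) (fun x _ => by positivity)
    (fun x y hx _ => by rw [Real.sqrt_mul hx]; ring) (by simp)]
  gcongr
  simpa using tsum_pnat_ofReal_le (fun _ => by positivity) sum_range_inv_mul_sqrt_le

noncomputable def tailSumInvSq (j : ℕ) (t : ℝ) : ℝ≥0∞ :=
  ∑' c : Fin j → ℕ+, ENNReal.ofReal (if t < tupleProd c then ((tupleProd c : ℝ) ^ 2)⁻¹ else 0)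

lemma tailSumInvSq_le_two_pow (j : ℕ) (t : ℝ) : tailSumInvSq j t ≤ 2 ^ j :=
  (ENNReal.tsum_le_tsum fun c => ENNReal.ofReal_le_ofReal <| by
    split_ifs <;> simp [-inv_pow]).trans (tsum_tuple_inv_sq_le j)

lemma tailSumInvSq_succ (j : ℕ) (t : ℝ) :
    tailSumInvSq (j + 1) t =
      ∑' d : ℕ+, ENNReal.ofReal (((d : ℝ) ^ 2)⁻¹) * tailSumInvSq j (t / d) := by
  rw [tailSumInvSq, tsum_tuple_succ]
  refine tsum_congr fun d => ?_
  rw [tailSumInvSq, ← ENNReal.tsum_mul_left]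
  refine tsum_congr fun c => ?_
  have hd : (0 : ℝ) < d := by exact_mod_cast d.pos
  rw [← ENNReal.ofReal_mul (by positivity), tupleProd_cons, Nat.cast_mul, mul_ite, mul_zero,
    mul_pow, mul_inv]
  simp only [div_lt_iff₀' hd]

lemma tailSumInvSq_one_le {t : ℝ} (ht : 0 < t) : tailSumInvSq 1 t ≤ ENNReal.ofReal (2 / t) := by
  rw [tailSumInvSq_succ]
  refine le_of_eq_of_le (tsum_congr fun d => ?_) (tsum_pnat_inv_sq_of_lt_le_two_div ht)
  have hd : (0 : ℝ) < d := by exact_mod_cast d.pos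
  have h₀ : tailSumInvSq 0 (t / d) = ENNReal.ofReal (if t / d < 1 then 1 else 0) := by
    simp [tailSumInvSq, tupleProd]
  rw [h₀, ← ENNReal.ofReal_mul (by positivity), mul_ite, mul_one, mul_zero]
  simp only [div_lt_one hd]

lemma tailSumInvSq_succ_le_of_le {j : ℕ} {t T A : ℝ} (ht : 0 < t) (htT : t ≤ T) (hT : 1 ≤ T)
    (hA : 0 ≤ A) (h : ∀ s, 0 < s → s ≤ T → tailSumInvSq j s ≤ ENNReal.ofReal (A / s)) :
    tailSumInvSq (j + 1) t ≤ ENNReal.ofReal (((1 + Real.log T) * A + 2 ^ (j + 1)) / t) := by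
  have hterm (d : ℕ+) : ENNReal.ofReal (((d : ℝ) ^ 2)⁻¹) * tailSumInvSq j (t / d) ≤
      ENNReal.ofReal (if (d : ℝ) ≤ t then (d : ℝ)⁻¹ else 0) * ENNReal.ofReal (A / t) +
        ENNReal.ofReal (if t < d then ((d : ℝ) ^ 2)⁻¹ else 0) * 2 ^ j := by
    have hd : (1 : ℝ) ≤ d := by exact_mod_cast d.pos
    by_cases hdt : (d : ℝ) ≤ t
    · rw [if_pos hdt, if_neg hdt.not_gt, ENNReal.ofReal_zero, zero_mul, add_zero]
      calc ENNReal.ofReal (((d : ℝ) ^ 2)⁻¹) * tailSumInvSq j (t / d)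
          ≤ ENNReal.ofReal (((d : ℝ) ^ 2)⁻¹) * ENNReal.ofReal (A / (t / d)) := by
            gcongr
            exact h _ (div_pos ht (by positivity)) ((div_le_self ht.le hd).trans htT)
        _ = _ := by
            rw [← ENNReal.ofReal_mul (by positivity), ← ENNReal.ofReal_mul (by positivity)]
            congr 1
            field_simp
    · rw [if_neg hdt, if_pos (not_le.mp hdt), ENNReal.ofReal_zero, zero_mul, zero_add]
      gcongr
      exact tailSumInvSq_le_two_pow _ _
  calc tailSumInvSq (j + 1) t
      ≤ ∑' d : ℕ+, (ENNReal.ofReal (if (d : ℝ) ≤ t then (d : ℝ)⁻¹ else 0) * ENNReal.ofReal (A / t) +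
          ENNReal.ofReal (if t < d then ((d : ℝ) ^ 2)⁻¹ else 0) * 2 ^ j) := by
        rw [tailSumInvSq_succ]
        exact ENNReal.tsum_le_tsum hterm
    _ ≤ ENNReal.ofReal (1 + Real.log T) * ENNReal.ofReal (A / t) +
          ENNReal.ofReal (2 / t) * ENNReal.ofReal (2 ^ j) := by
        rw [ENNReal.tsum_add, ENNReal.tsum_mul_right, ENNReal.tsum_mul_right,
          ENNReal.ofReal_pow zero_le_two, ENNReal.ofReal_ofNat]
        gcongr
        exacts [tsum_pnat_inv_of_le_le htT hT, tsum_pnat_inv_sq_of_lt_le_two_div ht]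
    _ = _ := by
        have hlog : 0 ≤ Real.log T := Real.log_nonneg hT
        rw [← ENNReal.ofReal_mul (by positivity), ← ENNReal.ofReal_mul (by positivity),
          ← ENNReal.ofReal_add (by positivity) (by positivity)]
        congr 1
        ring

lemma tailSumInvSq_succ_le (j : ℕ) {t T : ℝ} (ht : 0 < t) (htT : t ≤ T) (hT : 1 ≤ T) :
    tailSumInvSq (j + 1) t ≤ ENNReal.ofReal (4 ^ (j + 1) * (1 + Real.log T) ^ j / t) := by
  have hlog : 0 ≤ Real.log T := Real.log_nonneg hT
  induction j generalizing t with
  | zero => exact (tailSumInvSq_one_le ht).trans (ENNReal.ofReal_le_ofReal (by gcongr; norm_num))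
  | succ j ih =>
    refine (tailSumInvSq_succ_le_of_le ht htT hT (by positivity) fun s hs hsT =>
      ih hs hsT).trans (ENNReal.ofReal_le_ofReal ?_)
    have h₂ : (2 : ℝ) ^ (j + 1 + 1) ≤ 4 ^ (j + 1) * 2 := by
      rw [show (4 : ℝ) = 2 ^ 2 by norm_num, ← pow_mul, ← pow_succ]
      exact pow_le_pow_right₀ one_le_two (by omega)
    have h₁ : (1 : ℝ) ≤ (1 + Real.log T) ^ (j + 1) := one_le_pow₀ (by linarith)
    have e₁ : (1 + Real.log T) * (4 ^ (j + 1) * (1 + Real.log T) ^ j) =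
        4 ^ (j + 1) * (1 + Real.log T) ^ (j + 1) := by ring
    have e₂ : (4 : ℝ) ^ (j + 1 + 1) * (1 + Real.log T) ^ (j + 1) =
        4 * (4 ^ (j + 1) * (1 + Real.log T) ^ (j + 1)) := by ring
    gcongr
    rw [e₁, e₂]
    have h₄ : (0 : ℝ) ≤ 4 ^ (j + 1) := by positivity
    linarith [mul_le_mul_of_nonneg_left h₁ h₄]

lemma tsum_tuple_inv_sq_mul_cube_of_lt_le (j : ℕ) {N b : ℝ} (hN : 1 ≤ N) (hb : 1 ≤ b) :
    ∑' c : Fin (j + 1) → ℕ+,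
        ENNReal.ofReal (if N < (tupleProd c : ℝ) ^ 2 * b ^ 3
          then ((tupleProd c : ℝ) ^ 2 * b ^ 3)⁻¹ else 0) ≤
      ENNReal.ofReal (4 ^ (j + 1) * (1 + Real.log N) ^ j / √N) * ENNReal.ofReal ((b * √b)⁻¹) := by
  set s := b * √b with hs
  have hs0 : 0 < s := by positivity
  have hbs : b ^ 3 = s ^ 2 := by rw [hs, mul_pow, Real.sq_sqrt (by linarith)]; ring
  have hsplit (c : Fin (j + 1) → ℕ+) :
      ENNReal.ofReal (if N < (tupleProd c : ℝ) ^ 2 * b ^ 3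
        then ((tupleProd c : ℝ) ^ 2 * b ^ 3)⁻¹ else 0) =
      ENNReal.ofReal ((b ^ 3)⁻¹) *
        ENNReal.ofReal (if √(N / b ^ 3) < tupleProd c then ((tupleProd c : ℝ) ^ 2)⁻¹ else 0) := by
    have hc : (0 : ℝ) < tupleProd c := by exact_mod_cast tupleProd_pos c
    rw [← ENNReal.ofReal_mul (by positivity), mul_ite, mul_zero, mul_inv, mul_comm (b ^ 3)⁻¹]
    simp only [Real.sqrt_lt' hc, div_lt_iff₀ (by positivity : 0 < b ^ 3)]
  have hlog : 0 ≤ Real.log N := Real.log_nonneg hN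
  calc _ = ENNReal.ofReal ((b ^ 3)⁻¹) * tailSumInvSq (j + 1) √(N / b ^ 3) := by
        rw [tailSumInvSq, ← ENNReal.tsum_mul_left]
        exact tsum_congr hsplit
    _ ≤ ENNReal.ofReal ((b ^ 3)⁻¹) *
          ENNReal.ofReal (4 ^ (j + 1) * (1 + Real.log N) ^ j / √(N / b ^ 3)) := by
        gcongr
        refine tailSumInvSq_succ_le j (by positivity) ?_ hN
        calc √(N / b ^ 3) ≤ √N := Real.sqrt_le_sqrt (div_le_self (by linarith) (one_le_pow₀ hb))
          _ ≤ N := Real.sqrt_le_self_iff.mpr (Or.inr hN)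
    _ = _ := by
        rw [← ENNReal.ofReal_mul (by positivity), ← ENNReal.ofReal_mul (by positivity),
          Real.sqrt_div' _ (by positivity), hbs, Real.sqrt_sq hs0.le]
        congr 1
        field_simp

lemma tsum_inv_sqMulCube_of_lt_le {j : ℕ} (m : ℕ) (hj : 1 ≤ j) {N : ℝ} (hN : 1 ≤ N) :
    ∑' q : (Fin j → ℕ+) × (Fin m → ℕ+),
        ENNReal.ofReal (if N < sqMulCube q then (sqMulCube q : ℝ)⁻¹ else 0) ≤
      ENNReal.ofReal (4 ^ j * 3 ^ m * (1 + Real.log N) ^ (j - 1) / √N) := by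
  obtain ⟨j, rfl⟩ := Nat.exists_eq_add_of_le' hj
  have hK : 0 ≤ 4 ^ (j + 1) * (1 + Real.log N) ^ j / √N := by
    have := Real.log_nonneg hN
    positivity
  simp only [sqMulCube, Nat.cast_mul, Nat.cast_pow]
  rw [ENNReal.tsum_prod', ENNReal.tsum_comm]
  calc _ ≤ ∑' e : Fin m → ℕ+, ENNReal.ofReal (4 ^ (j + 1) * (1 + Real.log N) ^ j / √N) *
          ENNReal.ofReal (((tupleProd e : ℝ) * √(tupleProd e))⁻¹) :=
        ENNReal.tsum_le_tsum fun e => tsum_tuple_inv_sq_mul_cube_of_lt_le j hN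
          (Nat.one_le_cast.mpr (tupleProd_pos e))
    _ ≤ ENNReal.ofReal (4 ^ (j + 1) * (1 + Real.log N) ^ j / √N) * 3 ^ m := by
        rw [ENNReal.tsum_mul_left]
        gcongr
        exact tsum_tuple_inv_mul_sqrt_le m
    _ = _ := by
        rw [← ENNReal.ofReal_ofNat, ← ENNReal.ofReal_pow (by norm_num), ← ENNReal.ofReal_mul hK,
          Nat.add_sub_cancel]
        congr 1
        ring

lemma one_add_log_pow_le {x : ℝ} (hx : 2 ≤ x) {a b : ℕ} (hab : a ≤ b) :
    (1 + Real.log x) ^ a ≤ ((1 + Real.log 2) / Real.log 2) ^ b * Real.log x ^ b := by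
  have hl2 : 0 < Real.log 2 := Real.log_pos one_lt_two
  have hlx : Real.log 2 ≤ Real.log x := Real.log_le_log two_pos hx
  have h : 1 + Real.log x ≤ (1 + Real.log 2) / Real.log 2 * Real.log x := by
    rw [div_mul_eq_mul_div, le_div_iff₀ hl2]
    nlinarith
  rw [← mul_pow]
  exact (pow_le_pow_left₀ (by linarith) h a).trans (pow_le_pow_right₀ (by linarith) hab)

lemma tsum_le_of_tsum_ofReal_le {α : Type*} {f : α → ℝ} {c : ℝ} (hf : ∀ a, 0 ≤ f a) (hc : 0 ≤ c)
    (h : ∑' a, ENNReal.ofReal (f a) ≤ ENNReal.ofReal c) : ∑' a, f a ≤ c := by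
  by_cases hs : Summable f
  · rwa [← ENNReal.ofReal_tsum_of_nonneg hf hs, ENNReal.ofReal_le_ofReal_iff hc] at h
  · rw [tsum_eq_zero_of_not_summable hs]
    exact hc

/-- The sum over square-full integers `n > N` of `τ_k(n)/n` is
`O((log N)^(k²+k³−2) / N^{1/2})`, with implied constant depending only on `k`. -/
theorem stmt_10 (k : ℕ) (hk : 0 < k) :
    ∃ C : ℝ, 0 < C ∧ ∀ N : ℕ, 2 ≤ N →
      (∑' n : ℕ, if N < n ∧ Squarefull n then (tauk k n : ℝ) / n else 0) ≤
        C * (Real.log N) ^ (k ^ 2 + k ^ 3 - 2) / Real.sqrt N := by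
  refine ⟨4 ^ k ^ 2 * 3 ^ k ^ 3 * ((1 + Real.log 2) / Real.log 2) ^ (k ^ 2 + k ^ 3 - 2),
    by positivity, fun N hN => ?_⟩
  have hN2 : (2 : ℝ) ≤ N := by exact_mod_cast hN
  have hlog : 0 ≤ Real.log N := Real.log_nonneg (by linarith)
  have hk2 : 1 ≤ k ^ 2 := Nat.one_le_pow _ _ hk
  have hk3 : 1 ≤ k ^ 3 := Nat.one_le_pow _ _ hk
  refine tsum_le_of_tsum_ofReal_le (fun n => by split_ifs <;> positivity) (by positivity) ?_
  calc _ ≤ _ := tsum_squarefull_le_tsum_inv_sqMulCube k N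
    _ ≤ ENNReal.ofReal (4 ^ k ^ 2 * 3 ^ k ^ 3 * (1 + Real.log N) ^ (k ^ 2 - 1) / √N) :=
        tsum_inv_sqMulCube_of_lt_le _ hk2 (by linarith)
    _ ≤ _ := by
        refine ENNReal.ofReal_le_ofReal ?_
        rw [mul_assoc (4 ^ k ^ 2 * 3 ^ k ^ 3 : ℝ)]
        gcongr
        exact one_add_log_pow_le hN2 (by omega)
end

section
/- Let f ∈ Z[x] be an irreducible cubic polynomial with nonzero discriminant and leading coefficient a. Let d be a square-free integer, and let x, y be rational numbers with y ≠ 0 such that P = (x, d^{1/2}·y) lies on E : y^2 = f(x). Then the height h_y(P) with respect to the y-coordinate satisfies h_y(P) ≥ (3/8)·log|d| − (1/2)·log|a|. -/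
/-!
Write `y = m/n` and `d y² = N/D` in lowest terms, so that `N n² = |d| m² D`. Let `p` be a
prime with `p ∣ d` (so `v_p(d) = 1`) and `p ∤ N`. Then `p ∣ n`, `p ∤ m` and
`v_p(D) = 2 v_p(n) - 1`. If moreover `p ∤ a`, clearing the denominator of `x = u/w` in the
curve equation gives `d m² w³ = n² F(u, w)` with `F` the homogenised cubic; comparing
valuations forces `p ∣ w`, so `F(u, w) ≡ a u³` is a `p`-adic unit and
`2 v_p(n) = 1 + 3 v_p(w) ≥ 4`. In every case `3 v_p(d) ≤ 2 v_p(a) + 3 v_p(N) + v_p(D)`, hence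
`|d|³ ∣ a² N³ D ≤ a² H(d y²)⁴`, and taking logarithms gives the bound.
-/

section

variable {a b c e d : ℤ} {x y : ℚ}

lemma Rat.cubic_eq_clear_denoms (h : d * y ^ 2 = a * x ^ 3 + b * x ^ 2 + c * x + e) :
    d * y.num ^ 2 * x.den ^ 3 =
      y.den ^ 2 *
        (a * x.num ^ 3 + b * x.num ^ 2 * x.den + c * x.num * x.den ^ 2 + e * x.den ^ 3) := by
  rw [← Rat.num_div_den x, ← Rat.num_div_den y] at h
  have hx : (x.den : ℚ) ≠ 0 := by positivity
  have hy : (y.den : ℚ) ≠ 0 := by positivity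
  field_simp at h
  qify
  linear_combination h

lemma Prime.not_dvd_cubic_form_of_dvd {p a b c e u w : ℤ} (hp : Prime p) (hpa : ¬ p ∣ a)
    (hpu : ¬ p ∣ u) (hpw : p ∣ w) :
    ¬ p ∣ a * u ^ 3 + b * u ^ 2 * w + c * u * w ^ 2 + e * w ^ 3 := by
  intro hS
  have hau : p ∣ a * u ^ 3 := by
    have := dvd_sub hS (dvd_mul_of_dvd_left hpw (b * u ^ 2 + c * u * w + e * w ^ 2))
    rwa [show a * u ^ 3 + b * u ^ 2 * w + c * u * w ^ 2 + e * w ^ 3 -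
      w * (b * u ^ 2 + c * u * w + e * w ^ 2) = a * u ^ 3 by ring] at this
  rcases hp.dvd_or_dvd hau with h | h
  · exact hpa h
  · exact hpu (hp.dvd_of_dvd_pow h)

lemma Rat.num_intCast_mul_sq_mul_den_sq (d : ℤ) (y : ℚ) :
    (d * y ^ 2).num * y.den ^ 2 = d * y.num ^ 2 * (d * y ^ 2).den := by
  have := Rat.mul_num_den' d (y ^ 2)
  rw [Rat.num_pow, Rat.den_pow, Rat.num_intCast, Rat.den_intCast] at this
  push_cast at this
  linear_combination this

lemma sq_dvd_den_of_cubic_eq {p : ℕ} (hp : p.Prime) (hd : Squarefree d) (hpd : (p : ℤ) ∣ d)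
    (hpa : ¬ (p : ℤ) ∣ a) (hpy : p ∣ y.den)
    (h : d * y ^ 2 = a * x ^ 3 + b * x ^ 2 + c * x + e) : p ^ 2 ∣ y.den := by
  set S := a * x.num ^ 3 + b * x.num ^ 2 * x.den + c * x.num * x.den ^ 2 + e * x.den ^ 3
  have hpm : ¬ p ∣ y.num.natAbs := hp.coprime_iff_not_dvd.1 (y.reduced.symm.coprime_dvd_left hpy)
  have hm : y.num.natAbs ≠ 0 := fun h0 => hpm (h0 ▸ dvd_zero p)
  have hE : d.natAbs * y.num.natAbs ^ 2 * x.den ^ 3 = y.den ^ 2 * S.natAbs := by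
    simpa [Int.natAbs_mul, Int.natAbs_pow] using congrArg Int.natAbs (Rat.cubic_eq_clear_denoms h)
  have hS : S.natAbs ≠ 0 := by
    rintro h0
    simp [h0, hd.ne_zero, hm, x.den_nz] at hE
  have hval : d.natAbs.factorization p + 2 * y.num.natAbs.factorization p +
      3 * x.den.factorization p = 2 * y.den.factorization p + S.natAbs.factorization p := by
    simpa [Nat.factorization_mul, hd.ne_zero, hm, hS, x.den_nz, y.den_nz] using
      congrArg (·.factorization p) hE
  have hvd : d.natAbs.factorization p = 1 :=
    Nat.factorization_eq_one_of_squarefree (Int.squarefree_natAbs.2 hd) hp (Int.natCast_dvd.1 hpd)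
  have hvn : 1 ≤ y.den.factorization p := (hp.dvd_iff_one_le_factorization y.den_nz).1 hpy
  have hvm := Nat.factorization_eq_zero_of_not_dvd hpm
  have hpw : p ∣ x.den := by
    by_contra hpw
    have := Nat.factorization_eq_zero_of_not_dvd hpw
    omega
  have hvS : S.natAbs.factorization p = 0 := by
    refine Nat.factorization_eq_zero_of_not_dvd fun hpS => ?_
    refine (Nat.prime_iff_prime_int.1 hp).not_dvd_cubic_form_of_dvd hpa (fun hpu => ?_)
      (Int.natCast_dvd_natCast.2 hpw) (Int.natCast_dvd.2 hpS)
    exact hp.coprime_iff_not_dvd.1 (x.reduced.symm.coprime_dvd_left hpw) (Int.natCast_dvd.1 hpu)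
  have hvw : 1 ≤ x.den.factorization p := (hp.dvd_iff_one_le_factorization x.den_nz).1 hpw
  exact (hp.pow_dvd_iff_le_factorization y.den_nz).2 (by omega)

lemma three_mul_factorization_le_of_cubic_eq (ha : a ≠ 0) (hd : Squarefree d)
    (hy : y ≠ 0) (h : d * y ^ 2 = a * x ^ 3 + b * x ^ 2 + c * x + e) (p : ℕ) :
    3 * d.natAbs.factorization p ≤ 2 * a.natAbs.factorization p +
      3 * (d * y ^ 2).num.natAbs.factorization p + (d * y ^ 2).den.factorization p := by
  by_cases hp : p.Prime
  swap
  · simp [Nat.factorization_eq_zero_of_not_prime _ hp]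
  by_cases hpd : p ∣ d.natAbs
  swap
  · simp [Nat.factorization_eq_zero_of_not_dvd hpd]
  set q : ℚ := d * y ^ 2
  have hq0 : q.num.natAbs ≠ 0 := by simp [q, hd.ne_zero, hy]
  have hm : y.num.natAbs ≠ 0 := by simpa using hy
  have hcross : q.num.natAbs * y.den ^ 2 = d.natAbs * y.num.natAbs ^ 2 * q.den := by
    simpa [Int.natAbs_mul, Int.natAbs_pow] using
      congrArg Int.natAbs (Rat.num_intCast_mul_sq_mul_den_sq d y)
  have hval : q.num.natAbs.factorization p + 2 * y.den.factorization p =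
      d.natAbs.factorization p + 2 * y.num.natAbs.factorization p + q.den.factorization p := by
    simpa [Nat.factorization_mul, hd.ne_zero, hm, hq0, q.den_nz, y.den_nz] using
      congrArg (·.factorization p) hcross
  have hvd := Nat.factorization_eq_one_of_squarefree (Int.squarefree_natAbs.2 hd) hp hpd
  by_cases hpN : p ∣ q.num.natAbs
  · have := (hp.dvd_iff_one_le_factorization hq0).1 hpN
    omega
  have hvN := Nat.factorization_eq_zero_of_not_dvd hpN
  have hpn : p ∣ y.den := (hp.dvd_iff_one_le_factorization y.den_nz).2 (by omega)
  have hvm := Nat.factorization_eq_zero_of_not_dvd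
    (hp.coprime_iff_not_dvd.1 (y.reduced.symm.coprime_dvd_left hpn))
  by_cases hpa : (p : ℤ) ∣ a
  · have := (hp.dvd_iff_one_le_factorization (Int.natAbs_ne_zero.2 ha)).1 (Int.natCast_dvd.1 hpa)
    omega
  have := (hp.pow_dvd_iff_le_factorization y.den_nz).1
    (sq_dvd_den_of_cubic_eq hp hd (Int.natCast_dvd.2 hpd) hpa hpn h)
  omega

lemma natAbs_pow_three_dvd_of_cubic_eq (ha : a ≠ 0) (hd : Squarefree d)
    (hy : y ≠ 0) (h : d * y ^ 2 = a * x ^ 3 + b * x ^ 2 + c * x + e) :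
    d.natAbs ^ 3 ∣ a.natAbs ^ 2 * (d * y ^ 2).num.natAbs ^ 3 * (d * y ^ 2).den := by
  have hN : (d * y ^ 2 : ℚ).num.natAbs ≠ 0 := by simp [hd.ne_zero, hy]
  rw [← Nat.factorization_prime_le_iff_dvd (by simp [hd.ne_zero]) (by simp [ha, hN])]
  intro p _
  simpa [Nat.factorization_mul, ha, hN] using three_mul_factorization_le_of_cubic_eq ha hd hy h p

lemma natAbs_pow_three_le_of_cubic_eq (ha : a ≠ 0) (hd : Squarefree d)
    (hy : y ≠ 0) (h : d * y ^ 2 = a * x ^ 3 + b * x ^ 2 + c * x + e) :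
    d.natAbs ^ 3 ≤ a.natAbs ^ 2 * max (d * y ^ 2).num.natAbs (d * y ^ 2).den ^ 4 := by
  set q : ℚ := d * y ^ 2
  calc d.natAbs ^ 3 ≤ a.natAbs ^ 2 * q.num.natAbs ^ 3 * q.den :=
        Nat.le_of_dvd (by simp [ha, hd.ne_zero, hy, q, q.den_pos])
          (natAbs_pow_three_dvd_of_cubic_eq ha hd hy h)
    _ ≤ a.natAbs ^ 2 * max q.num.natAbs q.den ^ 3 * max q.num.natAbs q.den := by gcongr <;> simp
    _ = a.natAbs ^ 2 * max q.num.natAbs q.den ^ 4 := by ring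

end

theorem stmt_12_general (f : Cubic ℤ) (ha : f.a ≠ 0)
    (d : ℤ) (hd : Squarefree d) (x y : ℚ) (hy : y ≠ 0)
    (hxy : (d : ℚ) * y ^ 2 = Polynomial.eval x (f.toPoly.map (Int.castRingHom ℚ))) :
    (3 / 8) * Real.log |(d : ℝ)| - (1 / 2) * Real.log |(f.a : ℝ)| ≤
      (1 / 2) * Real.log (max (|((d : ℚ) * y ^ 2).num| : ℝ) (((d : ℚ) * y ^ 2).den : ℝ)) := by
  set H : ℝ := max (|((d : ℚ) * y ^ 2).num| : ℝ) (((d : ℚ) * y ^ 2).den : ℝ)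
  have hcubic : (d : ℚ) * y ^ 2 = f.a * x ^ 3 + f.b * x ^ 2 + f.c * x + f.d := by
    simp [hxy, Cubic.toPoly]
  have hle : |(d : ℝ)| ^ 3 ≤ |(f.a : ℝ)| ^ 2 * H ^ 4 := by
    have := (Nat.cast_le (α := ℝ)).2 (natAbs_pow_three_le_of_cubic_eq ha hd hy hcubic)
    push_cast [Nat.cast_natAbs] at this
    exact this
  have hlog := Real.log_le_log (pow_pos (abs_pos.2 (Int.cast_ne_zero.2 hd.ne_zero)) 3) hle
  rw [Real.log_mul (by positivity) (by positivity), Real.log_pow, Real.log_pow, Real.log_pow]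
    at hlog
  push_cast at hlog
  have : 0 ≤ Real.log |(f.a : ℝ)| := Real.log_nonneg (by exact_mod_cast Int.one_le_abs ha)
  linarith

/-- Let `f ∈ ℤ[x]` be an irreducible cubic with nonzero discriminant and leading
coefficient `a`.  Let `d` be square-free and `x, y ∈ ℚ` with `y ≠ 0` such that
`P = (x, √d·y)` lies on `E : y² = f(x)` (equivalently `d·y² = f(x)`).  Then
`h_y(P) ≥ (3/8)·log|d| − (1/2)·log|a|`.

Here `h_y(P) = log H(√d·y)` is the logarithmic Weil height of the `y`-coordinate; since
`H(α²) = H(α)²`, this equals `(1/2)·log H(d·y²) = (1/2)·log max(|num(d·y²)|, den(d·y²))`,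
which is the form used below. -/
theorem stmt_12 (f : Cubic ℤ) (ha : f.a ≠ 0) (hdisc : f.discr ≠ 0)
    (hirr : Irreducible (f.toPoly.map (Int.castRingHom ℚ)))
    (d : ℤ) (hd : Squarefree d) (x y : ℚ) (hy : y ≠ 0)
    (hxy : (d : ℚ) * y ^ 2 = Polynomial.eval x (f.toPoly.map (Int.castRingHom ℚ))) :
    (3 / 8) * Real.log |(d : ℝ)| - (1 / 2) * Real.log |(f.a : ℝ)| ≤
      (1 / 2) * Real.log (max (|((d : ℚ) * y ^ 2).num| : ℝ) (((d : ℚ) * y ^ 2).den : ℝ)) :=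
  stmt_12_general f ha d hd x y hy hxy
end

section
/- Let K be a number field and L a finite Galois extension of K with [L:K] odd. Then for every nonzero ideal a of O_K, the completely multiplicative Liouville function satisfies λ_L(a·O_L) = λ_K(a), where λ_K(a) = (−1)^{Ω_K(a)} with Ω_K the number of prime ideal factors of a counted with multiplicity. -/
/-!
`λ` is completely multiplicative, so it suffices to show that every nonzero prime `𝔭` of `𝓞 K`
has an odd number of prime factors in `𝔭 𝓞_L`, counted with multiplicity. Since `L/K` is Galois,
this number is `g e`, where `g` is the number of primes above `𝔭` and `e` their common ramification
index, and the fundamental identity `g e f = [L : K]` makes both `g` and `e` odd.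
-/

open NumberField

/-- The Liouville function of a nonzero ideal of the ring of integers of a number field:
`λ(𝔭₁^{e₁} ⋯ 𝔭ₖ^{eₖ}) = (−1)^{e₁+⋯+eₖ}`. -/
noncomputable def lambdaIdeal {F : Type} [Field F] [NumberField F] (a : Ideal (𝓞 F)) : ℤ :=
  (-1) ^ Multiset.card (UniqueFactorizationMonoid.normalizedFactors a)

open UniqueFactorizationMonoid

namespace Ideal

section

variable {A B : Type*} [CommRing A] [CommRing B] [IsDedekindDomain B] [Algebra A B]
  [Module.IsTorsionFree A B]

theorem card_normalizedFactors_map_eq_ncard_primesOver_mul_ramificationIdxIn [IsDomain A]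
    (G : Type*) [Group G] [Finite G] [MulSemiringAction G B] [IsGaloisGroup G A B]
    {p : Ideal A} [p.IsMaximal] (hp : p ≠ ⊥) :
    Multiset.card (normalizedFactors (p.map (algebraMap A B))) =
      (p.primesOver B).ncard * p.ramificationIdxIn B := by
  classical
  set m := normalizedFactors (p.map (algebraMap A B))
  have hm : m.toFinset = IsDedekindDomain.primesOverFinset p B := by
    rw [IsDedekindDomain.primesOverFinset, factors_eq_normalizedFactors]
  have hcount : ∀ P ∈ m.toFinset, m.count P = p.ramificationIdxIn B := by
    intro P hP
    obtain ⟨_, _⟩ := (mem_primesOver_iff_mem_normalizedFactors B hp).mpr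
      (Multiset.mem_toFinset.mp hP)
    rw [ramificationIdxIn_eq_ramificationIdx p P G,
      IsDedekindDomain.ramificationIdx_eq_normalizedFactors_count p P (map_ne_bot_of_ne_bot hp)]
  rw [← Multiset.toFinset_sum_count_eq, Finset.sum_congr rfl hcount, Finset.sum_const,
    smul_eq_mul, ← Set.ncard_coe_finset, hm, IsDedekindDomain.coe_primesOverFinset hp]

theorem odd_card_normalizedFactors_map [IsDedekindDomain A] [Module.Finite A B]
    (G : Type*) [Group G] [Finite G] [MulSemiringAction G B] [IsGaloisGroup G A B]
    (hG : Odd (Nat.card G)) {p : Ideal A} [p.IsMaximal] (hp : p ≠ ⊥) :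
    Odd (Multiset.card (normalizedFactors (p.map (algebraMap A B)))) := by
  rw [card_normalizedFactors_map_eq_ncard_primesOver_mul_ramificationIdxIn G hp]
  rw [← ncard_primesOver_mul_ramificationIdxIn_mul_inertiaDegIn p B G, Nat.odd_mul,
    Nat.odd_mul] at hG
  exact Nat.odd_mul.mpr ⟨hG.1, hG.2.1⟩

theorem card_normalizedFactors_map_modEq_two [IsDedekindDomain A]
    (h : ∀ p : Ideal A, p.IsMaximal → p ≠ ⊥ →
      Odd (Multiset.card (normalizedFactors (p.map (algebraMap A B)))))
    (a : Ideal A) :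
    Multiset.card (normalizedFactors (a.map (algebraMap A B))) ≡
      Multiset.card (normalizedFactors a) [MOD 2] := by
  induction a using induction_on_prime with
  | h₁ =>
    rw [zero_eq_bot, map_bot, ← zero_eq_bot, ← zero_eq_bot, normalizedFactors_zero,
      normalizedFactors_zero]
    exact .refl _
  | h₂ a ha =>
    rw [normalizedFactors_of_isUnit ha, isUnit_iff.mp ha, map_top,
      normalizedFactors_of_isUnit (isUnit_iff.mpr rfl)]
    exact .refl _
  | h₃ a q ha hq ih =>
    have hq0 : q ≠ ⊥ := hq.ne_zero
    have hqmap := h q ((isPrime_of_prime hq).isMaximal hq0) hq0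
    rw [Ideal.map_mul, normalizedFactors_mul (map_ne_bot_of_ne_bot hq0) (map_ne_bot_of_ne_bot ha),
      normalizedFactors_mul hq.ne_zero ha, Multiset.card_add, Multiset.card_add,
      normalizedFactors_irreducible hq.irreducible, Multiset.card_singleton]
    exact Nat.ModEq.add (Nat.odd_iff.mp hqmap) ih

end

end Ideal

theorem stmt_16_general (K L : Type) [Field K] [Field L] [NumberField K] [NumberField L]
    [Algebra K L] [IsGalois K L] (hodd : Odd (Module.finrank K L))
    (a : Ideal (𝓞 K)) :
    lambdaIdeal (Ideal.map (algebraMap (𝓞 K) (𝓞 L)) a) = lambdaIdeal a := by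
  have hGal : Odd (Nat.card Gal(L/K)) := by rwa [IsGaloisGroup.card_eq_finrank Gal(L/K) K L]
  have hprime : ∀ p : Ideal (𝓞 K), p.IsMaximal → p ≠ ⊥ →
      Odd (Multiset.card (normalizedFactors (p.map (algebraMap (𝓞 K) (𝓞 L))))) :=
    fun _ _ hp ↦ Ideal.odd_card_normalizedFactors_map Gal(L/K) hGal hp
  unfold lambdaIdeal
  rw [neg_one_pow_eq_pow_mod_two, Ideal.card_normalizedFactors_map_modEq_two hprime a,
    ← neg_one_pow_eq_pow_mod_two]

/-- Let `K` be a number field and `L` a finite Galois extension of `K` of odd degree.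
Then for every nonzero ideal `a` of `𝓞 K`, `λ_L(a·𝓞 L) = λ_K(a)`. -/
theorem stmt_16 (K L : Type) [Field K] [Field L] [NumberField K] [NumberField L]
    [Algebra K L] [IsGalois K L] (hodd : Odd (Module.finrank K L))
    (a : Ideal (𝓞 K)) (ha : a ≠ 0) :
    lambdaIdeal (Ideal.map (algebraMap (𝓞 K) (𝓞 L)) a) = lambdaIdeal a :=
  stmt_16_general K L hodd a
end

section
/- Let {a_n} be a sequence of complex numbers and M, R, C positive integers with: (1) a_n = 0 whenever rad(n) does not divide R; (2) s_d := Σ_n |a_{dn}| converges for every d; (3) s_d ≤ C/d for all M < d ≤ p_0·M, where p_0 is the largest prime factor of R. Then |Σ_n a_n − Σ_{n ≤ M} a_n| ≤ C'·(C/M)·(log(p_0·M))^{ω(R)}, where ω(R) is the number of distinct prime factors of R and C' is an absolute constant. -/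
/-!
A nonzero term `a n` with `n > M` has `rad n ∣ R`, so all prime factors of `n` are at most
`p₀`, and then `n` has a divisor `d ∈ (M, p₀ M]` with `rad d ∣ R`. Every such `n` is therefore a
multiple `d (m + 1)` of one of these `d`, so the tail `∑_{n > M} |a n|` is at most
`∑_d s_d ≤ (C / M) · #{d}`. Such a `d ≤ p₀ M` is determined by its exponents at the primes
`p ∣ R`, each at most `log_p (p₀ M)`, and `log_p (p₀ M) + 1 ≤ (2 / log p) · log (p₀ M)`; the factor
`2 / log p` exceeds `1` only for the four primes below `8`, where it is below `3`.
-/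

open Finset

theorem tsum_succ_sub_sum_Icc {G : Type*} [AddCommGroup G] [TopologicalSpace G]
    [IsTopologicalAddGroup G] [T2Space G] {a : ℕ → G} (ha : Summable fun n ↦ a (n + 1))
    (M : ℕ) :
    ∑' n, a (n + 1) - ∑ n ∈ Icc 1 M, a n = ∑' n, a (n + M + 1) := by
  rw [← ha.sum_add_tsum_nat_add M, ← Ico_add_one_right_eq_Icc, sum_Ico_eq_sum_range]
  simp [add_comm]

theorem sum_filter_dvd_le_tsum {f : ℕ → ℝ} (hf : 0 ≤ f) {d : ℕ} (hd : 0 < d)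
    (hfd : Summable fun m ↦ f (d * (m + 1))) {s : Finset ℕ} (hs : 0 ∉ s) :
    ∑ n ∈ s with d ∣ n, f n ≤ ∑' m, f (d * (m + 1)) := by
  have hmul : ∀ n ∈ s.filter (d ∣ ·), d * (n / d - 1 + 1) = n := by
    intro n hn
    obtain ⟨hns, k, rfl⟩ := mem_filter.1 hn
    have : k ≠ 0 := by rintro rfl; exact hs (by simpa using hns)
    rw [Nat.mul_div_cancel_left k hd, Nat.sub_add_cancel (by omega)]
  calc ∑ n ∈ s with d ∣ n, f n
      = ∑ m ∈ (s.filter (d ∣ ·)).image (fun n ↦ n / d - 1), f (d * (m + 1)) := by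
        rw [sum_image fun n hn n' hn' h ↦ by rw [← hmul n hn, ← hmul n' hn', h]]
        exact sum_congr rfl fun n hn ↦ by rw [hmul n hn]
    _ ≤ ∑' m, f (d * (m + 1)) := hfd.sum_le_tsum _ fun _ _ ↦ hf _

theorem tsum_nat_add_le_sum_tsum_mul {f : ℕ → ℝ} (hf : 0 ≤ f) {M : ℕ} {D : Finset ℕ}
    (hD : ∀ d ∈ D, 0 < d) (hfD : ∀ d ∈ D, Summable fun m ↦ f (d * (m + 1)))
    (hcover : ∀ n, M < n → f n ≠ 0 → ∃ d ∈ D, d ∣ n) :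
    ∑' n, f (n + M + 1) ≤ ∑ d ∈ D, ∑' m, f (d * (m + 1)) := by
  refine Real.tsum_le_of_sum_range_le (fun _ ↦ hf _) fun K ↦ ?_
  have hf_le : ∀ n, M < n → f n ≤ ∑ d ∈ D, if d ∣ n then f n else 0 := by
    intro n hn
    by_cases hfn : f n = 0
    · rw [hfn]
      exact sum_nonneg fun _ _ ↦ ite_nonneg le_rfl le_rfl
    obtain ⟨d, hdD, hdn⟩ := hcover n hn hfn
    simpa [hdn] using single_le_sum (f := fun d ↦ if d ∣ n then f n else 0)
      (fun _ _ ↦ ite_nonneg (hf n) le_rfl) hdD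
  calc ∑ i ∈ range K, f (i + M + 1)
      = ∑ n ∈ Ico (M + 1) (M + 1 + K), f n := by
        rw [sum_Ico_eq_sum_range, Nat.add_sub_cancel_left]
        exact sum_congr rfl fun i _ ↦ congrArg f (by omega)
    _ ≤ ∑ n ∈ Ico (M + 1) (M + 1 + K), ∑ d ∈ D, if d ∣ n then f n else 0 :=
        sum_le_sum fun n hn ↦ hf_le n (by simp only [mem_Ico] at hn; omega)
    _ = ∑ d ∈ D, ∑ n ∈ Ico (M + 1) (M + 1 + K) with d ∣ n, f n := by
        rw [sum_comm]; simp only [sum_filter]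
    _ ≤ ∑ d ∈ D, ∑' m, f (d * (m + 1)) :=
        sum_le_sum fun d hd ↦ sum_filter_dvd_le_tsum hf (hD d hd) (hfD d hd) (by simp)

theorem exists_dvd_mem_Ioc_of_primeFactors_le {n M P : ℕ} (hM : 0 < M) (hn : M < n)
    (hP : ∀ q ∈ n.primeFactors, q ≤ P) : ∃ d, d ∣ n ∧ M < d ∧ d ≤ P * M := by
  have hex : ∃ d, d ∣ n ∧ M < d := ⟨n, dvd_rfl, hn⟩
  obtain ⟨hdn, hMd⟩ := Nat.find_spec hex
  set d := Nat.find hex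
  have hq : d.minFac.Prime := Nat.minFac_prime (by omega)
  -- removing the smallest prime factor of the least divisor above `M` lands at or below `M`
  have hle : d / d.minFac ≤ M := by
    by_contra! h
    exact Nat.find_min hex (Nat.div_lt_self (by omega) hq.one_lt)
      ⟨(Nat.div_dvd_of_dvd d.minFac_dvd).trans hdn, h⟩
  have hqP : d.minFac ≤ P :=
    hP _ (Nat.mem_primeFactors.2 ⟨hq, d.minFac_dvd.trans hdn, by omega⟩)
  refine ⟨d, hdn, hMd, ?_⟩
  calc d = d.minFac * (d / d.minFac) := (Nat.mul_div_cancel' d.minFac_dvd).symm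
    _ ≤ P * M := Nat.mul_le_mul hqP hle

theorem card_le_prod_log_add_one {S D : Finset ℕ} {N : ℕ}
    (hD : ∀ d ∈ D, d ≠ 0 ∧ d ≤ N ∧ d.primeFactors ⊆ S) :
    #D ≤ ∏ p ∈ S, (Nat.log p N + 1) := by
  have hexp : ∀ d ∈ D, ∀ p, d.factorization p ≤ Nat.log p N := by
    intro d hd p
    obtain ⟨hd0, hdN, -⟩ := hD d hd
    by_cases hp : p.Prime
    · exact Nat.le_log_of_pow_le hp.one_lt
        ((Nat.le_of_dvd (Nat.pos_of_ne_zero hd0) (Nat.ordProj_dvd d p)).trans hdN)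
    · simp [Nat.factorization_eq_zero_of_not_prime d hp]
  calc #D ≤ #(S.pi fun p ↦ range (Nat.log p N + 1)) := by
        refine card_le_card_of_injOn (fun d p _ ↦ d.factorization p) ?_ ?_
        · intro d hd
          simpa [mem_pi, Nat.lt_succ_iff] using fun p _ ↦ hexp d hd p
        · intro d hd e he hde
          refine Nat.eq_of_factorization_eq (hD d hd).1 (hD e he).1 fun p ↦ ?_
          by_cases hp : p ∈ S
          · exact congrFun (congrFun hde p) hp
          · rw [Finsupp.notMem_support_iff.1 fun h ↦ hp ((hD d hd).2.2 (by simpa using h)),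
              Finsupp.notMem_support_iff.1 fun h ↦ hp ((hD e he).2.2 (by simpa using h))]
    _ = ∏ p ∈ S, (Nat.log p N + 1) := by simp [card_pi]

theorem natLog_add_one_le {p N : ℕ} (hp : 2 ≤ p) (hpN : p ≤ N) :
    (Nat.log p N + 1 : ℝ) ≤ 2 / Real.log p * Real.log N := by
  have hlogp : 0 < Real.log p := Real.log_pos (by exact_mod_cast hp)
  have hone : (1 : ℝ) ≤ Nat.log p N := by exact_mod_cast Nat.log_pos (by omega) hpN
  have hlogb : (Nat.log p N : ℝ) ≤ Real.log N / Real.log p := Real.natLog_le_logb N p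
  calc (Nat.log p N + 1 : ℝ) ≤ 2 * (Real.log N / Real.log p) := by linarith
    _ = 2 / Real.log p * Real.log N := by ring

theorem two_div_log_le {p : ℕ} (hp : p.Prime) : 2 / Real.log p ≤ if p < 8 then 3 else 1 := by
  have hlog2 := Real.log_two_gt_d9
  have hlog2p : Real.log 2 ≤ Real.log p :=
    Real.log_le_log (by norm_num) (by exact_mod_cast hp.two_le)
  split_ifs with h8
  · rw [div_le_iff₀ (by linarith)]
    linarith
  · have hlog8 : Real.log 8 ≤ Real.log p :=
      Real.log_le_log (by norm_num) (by exact_mod_cast not_lt.1 h8)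
    have : Real.log 8 = 3 * Real.log 2 := by
      rw [show (8 : ℝ) = 2 ^ 3 by norm_num, Real.log_pow]; norm_num
    rw [div_le_one (by linarith)]
    linarith

theorem prod_two_div_log_le {S : Finset ℕ} (hS : ∀ p ∈ S, p.Prime) :
    ∏ p ∈ S, 2 / Real.log p ≤ 81 := by
  have hsmall : S.filter (· < 8) ⊆ Nat.primesBelow 8 := fun p hp ↦ by
    obtain ⟨hpS, hp8⟩ := mem_filter.1 hp
    exact Nat.mem_primesBelow.2 ⟨hp8, hS p hpS⟩
  calc ∏ p ∈ S, 2 / Real.log p ≤ ∏ p ∈ S, if p < 8 then (3 : ℝ) else 1 :=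
        prod_le_prod (fun p hp ↦ div_nonneg zero_le_two (Real.log_natCast_nonneg p))
          fun p hp ↦ two_div_log_le (hS p hp)
    _ = 3 ^ #(S.filter (· < 8)) := by rw [prod_ite, prod_const, prod_const, one_pow, mul_one]
    _ ≤ 3 ^ #(Nat.primesBelow 8) := pow_le_pow_right₀ (by norm_num) (card_le_card hsmall)
    _ = 81 := by rw [show #(Nat.primesBelow 8) = 4 by decide]; norm_num

theorem prod_natLog_add_one_le {S : Finset ℕ} {N : ℕ} (hS : ∀ p ∈ S, p.Prime)
    (hSN : ∀ p ∈ S, p ≤ N) :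
    ((∏ p ∈ S, (Nat.log p N + 1) : ℕ) : ℝ) ≤ 81 * Real.log N ^ #S := by
  push_cast
  calc ∏ p ∈ S, ((Nat.log p N : ℝ) + 1) ≤ ∏ p ∈ S, (2 / Real.log p * Real.log N) :=
        prod_le_prod (fun _ _ ↦ by positivity)
          fun p hp ↦ natLog_add_one_le (hS p hp).two_le (hSN p hp)
    _ = (∏ p ∈ S, 2 / Real.log p) * Real.log N ^ #S := by rw [prod_mul_distrib, prod_const]
    _ ≤ 81 * Real.log N ^ #S :=
        mul_le_mul_of_nonneg_right (prod_two_div_log_le hS)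
          (pow_nonneg (Real.log_natCast_nonneg N) _)

def factoredWindow (S : Finset ℕ) (M : ℕ) : Finset ℕ :=
  (Ioc M (S.sup id * M)).filter (·.primeFactors ⊆ S)

theorem mem_factoredWindow {S : Finset ℕ} {M d : ℕ} :
    d ∈ factoredWindow S M ↔ M < d ∧ d ≤ S.sup id * M ∧ d.primeFactors ⊆ S := by
  simp [factoredWindow, and_assoc]

theorem exists_mem_factoredWindow_dvd {S : Finset ℕ} {M n : ℕ} (hM : 0 < M) (hn : M < n)
    (hnS : n.primeFactors ⊆ S) : ∃ d ∈ factoredWindow S M, d ∣ n := by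
  obtain ⟨d, hdn, hMd, hdN⟩ :=
    exists_dvd_mem_Ioc_of_primeFactors_le hM hn fun q hq ↦ le_sup (f := id) (hnS hq)
  exact ⟨d, mem_factoredWindow.2 ⟨hMd, hdN, (Nat.primeFactors_mono hdn (by omega)).trans hnS⟩,
    hdn⟩

theorem card_factoredWindow_le {S : Finset ℕ} (hS : ∀ p ∈ S, p.Prime) {M : ℕ} (hM : 0 < M) :
    (#(factoredWindow S M) : ℝ) ≤ 81 * Real.log (S.sup id * M : ℕ) ^ #S := by
  refine le_trans ?_ (prod_natLog_add_one_le hS fun p hp ↦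
    (le_sup (f := id) hp).trans (Nat.le_mul_of_pos_right _ hM))
  refine Nat.cast_le.2 (card_le_prod_log_add_one fun d hd ↦ ?_)
  obtain ⟨hMd, hdN, hdS⟩ := mem_factoredWindow.1 hd
  exact ⟨by omega, hdN, hdS⟩

/-- Let `{a_n}` be a sequence of complex numbers and `M`, `R`, `C` positive integers with:
(1) `a_n = 0` whenever `rad(n) ∤ R`; (2) `s_d := ∑_n |a_{dn}|` converges for every `d`;
(3) `s_d ≤ C/d` for all `M < d ≤ p₀·M`, where `p₀` is the largest prime factor of `R`.
Then `|∑_n a_n − ∑_{n ≤ M} a_n| ≤ C'·(C/M)·(log(p₀·M))^{ω(R)}`, where `ω(R)` is the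
number of distinct prime factors of `R` and `C'` is an absolute constant. -/
theorem stmt_19 :
    ∃ C' : ℝ, 0 < C' ∧
      ∀ (a : ℕ → ℂ) (M R C : ℕ), 0 < M → 0 < R → 0 < C →
        (∀ n : ℕ, 1 ≤ n → ¬ ((∏ p ∈ n.primeFactors, p) ∣ R) → a n = 0) →
        (∀ d : ℕ, 1 ≤ d → Summable (fun n : ℕ => ‖a (d * (n + 1))‖)) →
        (∀ d : ℕ, M < d → d ≤ (R.primeFactors.sup id) * M →
          (∑' n : ℕ, ‖a (d * (n + 1))‖) ≤ (C : ℝ) / d) →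
        ‖(∑' n : ℕ, a (n + 1)) - ∑ n ∈ Finset.Icc 1 M, a n‖ ≤
          C' * ((C : ℝ) / M) *
            (Real.log ((R.primeFactors.sup id) * M : ℕ)) ^ R.primeFactors.card := by
  refine ⟨81, by norm_num, fun a M R C hM hR _ hrad hsum hbound ↦ ?_⟩
  set D := factoredWindow R.primeFactors M
  have hDpos : ∀ d ∈ D, 0 < d := fun d hd ↦ Nat.zero_lt_of_lt (mem_factoredWindow.1 hd).1
  have hcover : ∀ n, M < n → ‖a n‖ ≠ 0 → ∃ d ∈ D, d ∣ n := fun n hMn han ↦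
    exists_mem_factoredWindow_dvd hM hMn <| (Nat.prod_primeFactors_dvd_iff hR.ne').1 <|
      not_not.1 fun h ↦ han (by rw [hrad n (by omega) h, norm_zero])
  have hsum₁ : Summable fun n ↦ ‖a (n + 1)‖ := by simpa using hsum 1 le_rfl
  calc ‖∑' n, a (n + 1) - ∑ n ∈ Icc 1 M, a n‖ = ‖∑' n, a (n + M + 1)‖ := by
        rw [tsum_succ_sub_sum_Icc hsum₁.of_norm]
    _ ≤ ∑' n, ‖a (n + M + 1)‖ := norm_tsum_le_tsum_norm ((summable_nat_add_iff M).2 hsum₁)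
    _ ≤ ∑ d ∈ D, ∑' m, ‖a (d * (m + 1))‖ :=
        tsum_nat_add_le_sum_tsum_mul (fun _ ↦ norm_nonneg _) hDpos
          (fun d hd ↦ hsum d (hDpos d hd)) hcover
    _ ≤ ∑ _d ∈ D, (C : ℝ) / M := sum_le_sum fun d hd ↦ by
        obtain ⟨hMd, hdN, -⟩ := mem_factoredWindow.1 hd
        exact (hbound d hMd hdN).trans <| div_le_div_of_nonneg_left (by positivity)
          (by exact_mod_cast hM) (by exact_mod_cast hMd.le)
    _ = #D * ((C : ℝ) / M) := by rw [sum_const, nsmul_eq_mul]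
    _ ≤ 81 * Real.log (R.primeFactors.sup id * M : ℕ) ^ #R.primeFactors * (C / M) := by
        gcongr
        exact card_factoredWindow_le (fun p hp ↦ Nat.prime_of_mem_primeFactors hp) hM
    _ = 81 * ((C : ℝ) / M) * Real.log (R.primeFactors.sup id * M : ℕ) ^ #R.primeFactors := by
        ring
end
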